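/- arXiv:2305.01314 — 9 statements merged into one kernel-verified Lean document; each statement's English description precedes it below -/
import Mathlib

section
/- Let G be a connected finite simple graph, let S and T be disjoint nonempty sets of vertices of G, and let k be a natural number. Then (G,S,T,k) is a yes-instance of Two-Sets Cut-Uncut if and only if there exists a partition (A,B) of V(G) with S ⊆ A, T ⊆ B and |∂(A)| ≤ k such that both induced subgraphs G[A] and G[B] are connected. -/
/-- The cut-set ∂(A): edges of `G` with exactly one endpoint in `A`. -/
def cutSet {V : Type*} (G : SimpleGraph V) (A : Set V) : Set (Sym2 V) :=
  {e | e ∈ G.edgeSet ∧ ∃ x y, e = s(x, y) ∧ x ∈ A ∧ y ∉ A}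

/-- `x` and `y` lie in the same connected component of the induced subgraph `G[A]`:
there is a walk from `x` to `y` all of whose vertices lie in `A`. -/
def ReachableIn {V : Type*} (G : SimpleGraph V) (A : Set V) (x y : V) : Prop :=
  ∃ wlk : G.Walk x y, ∀ u ∈ wlk.support, u ∈ A

/-- `(G,S,T,k)` is a yes-instance of Two-Sets Cut-Uncut. -/
def TwoSetsCutUncut {V : Type*} (G : SimpleGraph V) (S T : Set V) (k : ℕ) : Prop :=
  ∃ A B : Set V, A ∪ B = Set.univ ∧ A ∩ B = ∅ ∧ S ⊆ A ∧ T ⊆ B ∧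
    (∀ x ∈ S, ∀ y ∈ S, ReachableIn G A x y) ∧
    (∀ x ∈ T, ∀ y ∈ T, ReachableIn G B x y) ∧
    (cutSet G A).ncard ≤ k

/-!
A witness `(A, B)` of Two-Sets Cut-Uncut is improved in two steps. Replace `A` by the
component `A₀` of `G[A]` containing `S`, and take for the second side the component `B₀` of
`G[V ∖ A₀]` containing `T`. Every edge leaving a component of `G[X]` leaves `X`, so
`∂(B₀) ⊆ ∂(A₀) ⊆ ∂(A)`. Finally `G[V ∖ B₀]` is connected: in the connected graph `G`, a walk
from a vertex outside `B₀` towards `A₀` can only touch `B₀` after passing through a neighbour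
of `B₀` outside `B₀`, and such a neighbour already lies in the connected set `A₀`.
-/

section

open SimpleGraph

variable {V : Type*} {G : SimpleGraph V} {A B : Set V} {s x y z : V}

lemma cutSet_compl (G : SimpleGraph V) (A : Set V) : cutSet G Aᶜ = cutSet G A := by
  have key : ∀ A : Set V, cutSet G Aᶜ ⊆ cutSet G A := by
    rintro A e ⟨he, x, y, rfl, hx, hy⟩
    exact ⟨he, y, x, Sym2.eq_swap, not_not.mp hy, hx⟩
  exact (key A).antisymm (by simpa using key Aᶜ)

namespace ReachableIn

lemma refl (hx : x ∈ A) : ReachableIn G A x x :=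
  ⟨Walk.nil, by simpa using hx⟩

lemma symm (h : ReachableIn G A x y) : ReachableIn G A y x := by
  obtain ⟨w, hw⟩ := h
  exact ⟨w.reverse, by simpa using hw⟩

lemma trans (hxy : ReachableIn G A x y) (hyz : ReachableIn G A y z) : ReachableIn G A x z := by
  obtain ⟨w₁, hw₁⟩ := hxy
  obtain ⟨w₂, hw₂⟩ := hyz
  refine ⟨w₁.append w₂, fun u hu => ?_⟩
  rw [Walk.mem_support_append_iff] at hu
  exact hu.elim (hw₁ u) (hw₂ u)

lemma mono (hAB : A ⊆ B) (h : ReachableIn G A x y) : ReachableIn G B x y := by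
  obtain ⟨w, hw⟩ := h
  exact ⟨w, fun u hu => hAB (hw u hu)⟩

lemma mem_left (h : ReachableIn G A x y) : x ∈ A := by
  obtain ⟨w, hw⟩ := h
  exact hw x w.start_mem_support

lemma mem_right (h : ReachableIn G A x y) : y ∈ A :=
  h.symm.mem_left

lemma of_adj (hxy : G.Adj x y) (hx : x ∈ A) (hy : y ∈ A) : ReachableIn G A x y :=
  ⟨hxy.toWalk, by simp [hx, hy]⟩

end ReachableIn

lemma reachableIn_iff_reachable_induce (hx : x ∈ A) (hy : y ∈ A) :
    ReachableIn G A x y ↔ (G.induce A).Reachable ⟨x, hx⟩ ⟨y, hy⟩ :=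
  ⟨fun ⟨w, hw⟩ => ⟨w.induce A hw⟩,
    fun ⟨w⟩ => ⟨w.map (Embedding.induce A).toHom, fun u hu => by
      obtain ⟨⟨v, hv⟩, -, rfl⟩ := List.mem_map.1 (Walk.support_map _ w ▸ hu)
      exact hv⟩⟩

lemma induce_connected_iff :
    (G.induce A).Connected ↔ A.Nonempty ∧ ∀ x ∈ A, ∀ y ∈ A, ReachableIn G A x y := by
  rw [connected_iff, and_comm, Set.nonempty_coe_sort]
  refine and_congr_right fun _ => ?_
  simp only [Preconnected, Subtype.forall]
  exact forall₂_congr fun x hx => forall₂_congr fun y hy =>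
    (reachableIn_iff_reachable_induce hx hy).symm

/-- The vertex set of the component of `G[A]` containing `s`; empty when `s ∉ A`. -/
def componentIn (G : SimpleGraph V) (A : Set V) (s : V) : Set V :=
  {z | ReachableIn G A s z}

lemma componentIn_subset : componentIn G A s ⊆ A :=
  fun _ hz => ReachableIn.mem_right hz

lemma mem_componentIn_self (hs : s ∈ A) : s ∈ componentIn G A s :=
  ReachableIn.refl hs

lemma reachableIn_componentIn_of_mem (hy : y ∈ componentIn G A s) :
    ReachableIn G (componentIn G A s) s y := by
  classical
  obtain ⟨w, hw⟩ := hy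
  refine ⟨w, fun u hu => ⟨w.takeUntil u hu, fun v hv => ?_⟩⟩
  exact hw v (w.support_takeUntil_subset_support hu hv)

lemma induce_componentIn_connected (hs : s ∈ A) : (G.induce (componentIn G A s)).Connected :=
  induce_connected_iff.2 ⟨⟨s, mem_componentIn_self hs⟩, fun _ hx _ hy =>
    (reachableIn_componentIn_of_mem hx).symm.trans (reachableIn_componentIn_of_mem hy)⟩

lemma notMem_of_adj_of_mem_componentIn (hx : x ∈ componentIn G A s) (hxy : G.Adj x y)
    (hy : y ∉ componentIn G A s) : y ∉ A :=
  fun hyA => hy (ReachableIn.trans hx (.of_adj hxy (componentIn_subset hx) hyA))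

lemma cutSet_componentIn_subset : cutSet G (componentIn G A s) ⊆ cutSet G A := by
  rintro e ⟨he, x, y, rfl, hx, hy⟩
  exact ⟨he, x, y, rfl, componentIn_subset hx, notMem_of_adj_of_mem_componentIn hx he hy⟩

lemma induce_compl_componentIn_compl_connected (hG : G.Connected) {C : Set V}
    (hC : (G.induce C).Connected) (t : V) :
    (G.induce (componentIn G Cᶜ t)ᶜ).Connected := by
  set D := componentIn G Cᶜ t
  have hCD : C ⊆ Dᶜ := fun v hvC hvD => componentIn_subset hvD hvC
  obtain ⟨⟨c, hc⟩, hCreach⟩ := induce_connected_iff.1 hC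
  have hreach : ∀ v u, G.Walk v u → v ∈ Dᶜ → u ∈ C → ReachableIn G Dᶜ v c := by
    intro v u p hv hu
    induction p with
    | nil => exact (hCreach _ hu c hc).mono hCD
    | @cons v w _ hvw _ ih =>
      by_cases hw : w ∈ Dᶜ
      · exact (ReachableIn.of_adj hvw hv hw).trans (ih hw hu)
      · have hvC : v ∈ C :=
          not_not.mp (notMem_of_adj_of_mem_componentIn (not_not.mp hw) hvw.symm hv)
        exact (hCreach v hvC c hc).mono hCD
  have hreach_c : ∀ v ∈ Dᶜ, ReachableIn G Dᶜ v c :=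
    fun v hv => hreach v c (hG.preconnected v c).some hv hc
  exact induce_connected_iff.2 ⟨⟨c, hCD hc⟩, fun x hx y hy =>
    (hreach_c x hx).trans (hreach_c y hy).symm⟩

end

theorem stmt0_general {V : Type*} [Fintype V] (G : SimpleGraph V) (hG : G.Connected)
    (S T : Set V) (hS : S.Nonempty) (hT : T.Nonempty) (k : ℕ) :
    TwoSetsCutUncut G S T k ↔
      ∃ A B : Set V, A ∪ B = Set.univ ∧ A ∩ B = ∅ ∧ S ⊆ A ∧ T ⊆ B ∧
        (cutSet G A).ncard ≤ k ∧
        (G.induce A).Connected ∧ (G.induce B).Connected := by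
  constructor
  · rintro ⟨A, B, -, hAB, hSA, hTB, hSreach, hTreach, hcard⟩
    obtain ⟨s, hs⟩ := hS
    obtain ⟨t, ht⟩ := hT
    set A₀ := componentIn G A s
    set B₀ := componentIn G A₀ᶜ t
    have hBA₀ : B ⊆ A₀ᶜ := fun v hvB hvA₀ =>
      (Set.eq_empty_iff_forall_notMem.1 hAB) v ⟨componentIn_subset hvA₀, hvB⟩
    have hcut : cutSet G B₀ᶜ ⊆ cutSet G A := calc
      cutSet G B₀ᶜ = cutSet G B₀ := cutSet_compl G B₀
      _ ⊆ cutSet G A₀ᶜ := cutSet_componentIn_subset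
      _ = cutSet G A₀ := cutSet_compl G A₀
      _ ⊆ cutSet G A := cutSet_componentIn_subset
    refine ⟨B₀ᶜ, B₀, Set.compl_union_self _, Set.compl_inter_self _,
      fun x hx hxB₀ => componentIn_subset hxB₀ (hSreach s hs x hx),
      fun x hx => (hTreach t ht x hx).mono hBA₀,
      (Set.ncard_le_ncard hcut (Set.toFinite _)).trans hcard,
      induce_compl_componentIn_compl_connected hG (induce_componentIn_connected (hSA hs)) t,
      induce_componentIn_connected (hBA₀ (hTB ht))⟩
  · rintro ⟨A, B, hUn, hAB, hSA, hTB, hcard, hAconn, hBconn⟩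
    exact ⟨A, B, hUn, hAB, hSA, hTB,
      fun x hx y hy => (induce_connected_iff.1 hAconn).2 x (hSA hx) y (hSA hy),
      fun x hx y hy => (induce_connected_iff.1 hBconn).2 x (hTB hx) y (hTB hy), hcard⟩

theorem stmt0 {V : Type*} [Fintype V] (G : SimpleGraph V) (hG : G.Connected)
    (S T : Set V) (hS : S.Nonempty) (hT : T.Nonempty) (hST : Disjoint S T) (k : ℕ) :
    TwoSetsCutUncut G S T k ↔
      ∃ A B : Set V, A ∪ B = Set.univ ∧ A ∩ B = ∅ ∧ S ⊆ A ∧ T ⊆ B ∧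
        (cutSet G A).ncard ≤ k ∧
        (G.induce A).Connected ∧ (G.induce B).Connected :=
  stmt0_general G hG S T hS hT k
end

section
/- If there exists a feasible s-t-path of length ℓ, then the polynomial f(C_ℓ) is a nonzero polynomial. -/
/-- `w` is an `s`-`t`-walk of length `ℓ` in `G` (indexed by `Fin (ℓ+1)`). -/
def IsWalk {V : Type*} (G : SimpleGraph V) (s t : V) {ℓ : ℕ} (w : Fin (ℓ + 1) → V) : Prop :=
  w 0 = s ∧ w (Fin.last ℓ) = t ∧ ∀ i : Fin ℓ, G.Adj (w i.castSucc) (w i.succ)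

/-- `w` is a feasible `s`-`t`-walk: its labels sum to `c`, and it meets each `X i`
in at most one index. -/
def Feasible {V : Type*} (G : SimpleGraph V) (s t : V) {d p : ℕ}
    (g : Sym2 V → (Fin d → ZMod 2)) (c : Fin d → ZMod 2)
    (X : Fin p → Set V) {ℓ : ℕ} (w : Fin (ℓ + 1) → V) : Prop :=
  IsWalk G s t w ∧
  (∑ i : Fin ℓ, g s(w i.castSucc, w i.succ)) = c ∧
  ∀ i : Fin p, ∀ j j' : Fin (ℓ + 1), w j ∈ X i → w j' ∈ X i → j = j'

/-- The monomial `f(W)` of a walk: the product (with multiplicity) of the variables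
of the traversed edges. -/
noncomputable def walkMono {V : Type*} (F : Type*) [Field F] {ℓ : ℕ}
    (w : Fin (ℓ + 1) → V) : MvPolynomial (Sym2 V) F :=
  ∏ i : Fin ℓ, MvPolynomial.X s(w i.castSucc, w i.succ)

/-- The polynomial `f(C_ℓ)`: the sum of `f(W)` over all feasible `s`-`t`-walks of
length `ℓ`. -/
noncomputable def polyC {V : Type*} [Fintype V] (F : Type*) [Field F]
    (G : SimpleGraph V) (s t : V) {d p : ℕ}
    (g : Sym2 V → (Fin d → ZMod 2)) (c : Fin d → ZMod 2)
    (X : Fin p → Set V) (ℓ : ℕ) : MvPolynomial (Sym2 V) F :=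
  ∑ᶠ w ∈ {w : Fin (ℓ + 1) → V | Feasible G s t g c X w}, walkMono F w

/-!
The monomial of an `s`-`t`-path occurs in `f(C_ℓ)` with coefficient `1`: a walk starting
at `s` that traverses exactly the edges of a path, each once, must be that path. Indeed,
if the walk agrees with the path up to position `k`, its `k`-th edge is a path edge at `w k`;
it cannot be the edge entering `w k`, which the walk has already used, so it is the edge
leaving `w k`.
-/

open MvPolynomial

section WalkEdges

variable {V : Type*} {ℓ : ℕ}

def walkEdge (w : Fin (ℓ + 1) → V) (i : Fin ℓ) : Sym2 V :=
  s(w i.castSucc, w i.succ)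

noncomputable def edgeCount (w : Fin (ℓ + 1) → V) : Sym2 V →₀ ℕ :=
  ∑ i, Finsupp.single (walkEdge w i) 1

lemma walkMono_eq_monomial (F : Type*) [Field F] (w : Fin (ℓ + 1) → V) :
    walkMono F w = monomial (edgeCount w) (1 : F) := by
  rw [walkMono, edgeCount, monomial_sum_one]
  rfl

lemma toMultiset_edgeCount (w : Fin (ℓ + 1) → V) :
    Finsupp.toMultiset (edgeCount w) = ↑(List.ofFn (walkEdge w)) := by
  rw [← Fin.univ_val_map, ← Multiset.sum_map_singleton (Multiset.map _ _), Multiset.map_map,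
    edgeCount, Finsupp.toMultiset_sum]
  simp only [Finsupp.toMultiset_single, one_smul]
  rfl

lemma perm_of_edgeCount_eq {w w' : Fin (ℓ + 1) → V} (h : edgeCount w' = edgeCount w) :
    (List.ofFn (walkEdge w')).Perm (List.ofFn (walkEdge w)) := by
  rw [← Multiset.coe_eq_coe, ← toMultiset_edgeCount, ← toMultiset_edgeCount, h]

lemma walkEdge_injective {w : Fin (ℓ + 1) → V} (hw : Function.Injective w) :
    Function.Injective (walkEdge w) := by
  intro i j hij
  rcases Sym2.eq_iff.mp hij with ⟨h, -⟩ | ⟨h, h'⟩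
  · exact Fin.castSucc_inj.mp (hw h)
  · have e := congrArg Fin.val (hw h)
    have e' := congrArg Fin.val (hw h')
    simp only [Fin.val_castSucc, Fin.val_succ] at e e'
    omega

theorem eq_of_edgeCount_eq {w w' : Fin (ℓ + 1) → V} (hw : Function.Injective w)
    (h0 : w' 0 = w 0) (h : edgeCount w' = edgeCount w) : w' = w := by
  have hperm := perm_of_edgeCount_eq h
  have hinj' : Function.Injective (walkEdge w') :=
    List.nodup_ofFn.mp (hperm.nodup_iff.mpr (List.nodup_ofFn.mpr (walkEdge_injective hw)))
  have hmem : ∀ i, ∃ j, walkEdge w j = walkEdge w' i := fun i =>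
    List.mem_ofFn.mp (hperm.mem_iff.mp (List.mem_ofFn.mpr ⟨i, rfl⟩))
  suffices agree : ∀ n : ℕ, ∀ k : Fin (ℓ + 1), k.val ≤ n → w' k = w k from
    funext fun k => agree k k le_rfl
  intro n
  induction n with
  | zero =>
    intro k hk
    rwa [show k = 0 from Fin.ext (Nat.le_zero.mp hk)]
  | succ n ih =>
    intro k hk
    rcases Nat.lt_or_eq_of_le hk with hk | hk
    · exact ih k (by omega)
    set i : Fin ℓ := ⟨n, by omega⟩
    have hk : k = i.succ := Fin.ext hk
    have hedge : walkEdge w' i = s(w i.castSucc, w' i.succ) := by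
      rw [walkEdge, ih i.castSucc le_rfl]
    obtain ⟨j, hj⟩ := hmem i
    rcases Sym2.eq_iff.mp (hj.trans hedge) with ⟨hji, hj'⟩ | ⟨-, hj'⟩
    · rw [hk, ← hj', Fin.castSucc_inj.mp (hw hji)]
    · have hji : j.val + 1 = n := by simpa using congrArg Fin.val (hw hj')
      -- the edge leading into `w i` was already traversed by `w'` at step `j`
      have hwalk : walkEdge w' j = walkEdge w j := by
        rw [walkEdge, walkEdge, ih j.castSucc (by rw [Fin.val_castSucc]; omega),
          ih j.succ (by rw [Fin.val_succ]; omega)]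
      have : j.val = n := congrArg Fin.val (hinj' (hwalk.trans hj))
      omega

end WalkEdges

lemma coeff_edgeCount_polyC {V : Type*} [Fintype V] (F : Type*) [Field F]
    (G : SimpleGraph V) (s t : V) {d p : ℕ}
    (g : Sym2 V → (Fin d → ZMod 2)) (c : Fin d → ZMod 2) (X : Fin p → Set V) {ℓ : ℕ}
    {w : Fin (ℓ + 1) → V} (hw : Feasible G s t g c X w) (hpath : Function.Injective w) :
    coeff (edgeCount w) (polyC F G s t g c X ℓ) = 1 := by
  classical
  have hfin : {w : Fin (ℓ + 1) → V | Feasible G s t g c X w}.Finite := Set.toFinite _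
  rw [polyC, finsum_mem_eq_finite_toFinset_sum _ hfin, coeff_sum,
    Finset.sum_eq_single_of_mem w (hfin.mem_toFinset.mpr hw)]
  · rw [walkMono_eq_monomial, coeff_monomial, if_pos rfl]
  · intro w' hw' hne
    rw [walkMono_eq_monomial, coeff_monomial, if_neg]
    exact fun h => hne (eq_of_edgeCount_eq hpath
      (((hfin.mem_toFinset.mp hw').1.1).trans hw.1.1.symm) h)

theorem stmt2_general {V : Type*} [Fintype V] (G : SimpleGraph V) (s t : V)
    (d p : ℕ) (g : Sym2 V → (Fin d → ZMod 2)) (c : Fin d → ZMod 2)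
    (X : Fin p → Set V) (F : Type*) [Field F] (ℓ : ℕ)
    (w : Fin (ℓ + 1) → V) (hw : Feasible G s t g c X w)
    (hpath : Function.Injective w) :
    polyC F G s t g c X ℓ ≠ 0 := by
  intro h
  simpa [h] using coeff_edgeCount_polyC F G s t g c X hw hpath

theorem stmt2 {V : Type*} [Fintype V] (G : SimpleGraph V) (s t : V) (hst : s ≠ t)
    (d p : ℕ) (g : Sym2 V → (Fin d → ZMod 2)) (c : Fin d → ZMod 2)
    (X : Fin p → Set V) (F : Type*) [Field F] [CharP F 2] (ℓ : ℕ)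
    (w : Fin (ℓ + 1) → V) (hw : Feasible G s t g c X w)
    (hpath : Function.Injective w) :
    polyC F G s t g c X ℓ ≠ 0 :=
  stmt2_general G s t d p g c X F ℓ w hw hpath
end

section
/- There exists a feasible s-t-path if and only if there exists a natural number ℓ with f(C_ℓ) ≠ 0; moreover, when these hold, the minimum length of a feasible s-t-path equals the smallest ℓ such that f(C_ℓ) is a nonzero polynomial. -/
/-!
The coefficient of the monomial with exponent multiset `M` in `f(C_ℓ)` counts, modulo `2`, the
feasible walks with edge multiset `M`. Feasibility depends only on the edge multiset and the ends
of a walk (the handshake identity recovers the vertex multiplicities), so once one such walk is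
feasible, the coefficient is the parity of the number of all `s`-`t`-walks with edge multiset `M`.
A path is the only walk with its own edge multiset, so a feasible path of length `ℓ` gives the
coefficient `1`. Conversely, if an odd number of walks have edge multiset `M`, the edges of odd
multiplicity in `M` form an `s`-`t`-path of length at most `ℓ`; it is feasible, because dropping
pairs of equal edges leaves the label sum unchanged in characteristic `2` and does not increase
any vertex multiplicity.
-/

namespace WalkPolynomial

open Finset
open scoped Classical

variable {V : Type*}

lemma even_card_of_involution {α : Type*} {S : Finset α} (f : α → α) (hf : ∀ a ∈ S, f a ∈ S)
    (hff : ∀ a ∈ S, f (f a) = a) (hfix : ∀ a ∈ S, f a ≠ a) : Even #S := by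
  have h : ∑ _a ∈ S, (1 : ZMod 2) = 0 :=
    Finset.sum_involution (fun a _ => f a) (fun _ _ => by decide) (fun a ha _ => hfix a ha) hf hff
  rwa [Finset.sum_const, nsmul_one, ZMod.natCast_eq_zero_iff_even] at h

lemma exists_odd_card_fiber {α β : Type*} [DecidableEq β] {S : Finset α} (f : α → β)
    (hS : Odd #S) : ∃ a ∈ S, Odd #{x ∈ S | f x = f a} := by
  by_contra! h
  rw [Finset.card_eq_sum_card_image f] at hS
  refine Nat.not_even_iff_odd.mpr hS (Finset.even_sum _ fun b hb => ?_)
  obtain ⟨a, ha, rfl⟩ := Finset.mem_image.mp hb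
  exact Nat.not_odd_iff_even.mp (h a ha)

lemma count_cons_eq_count_mod_two {α : Type*} [DecidableEq α] {M N : Multiset α} {a : α}
    {L : List α} (hle : a ::ₘ N ≤ M) (heven : ∀ b, Even ((M - a ::ₘ N).count b))
    (hL : ∀ b, L.count b = N.count b % 2) (ha : a ∉ L) (b : α) :
    (a :: L).count b = M.count b % 2 := by
  have hM : M.count b = (M - a ::ₘ N).count b + (a ::ₘ N).count b := by
    rw [← Multiset.count_add, tsub_add_cancel_of_le hle]
  obtain ⟨k, hk⟩ := heven b
  have hLb := hL b
  rcases eq_or_ne b a with rfl | hb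
  · have h0 : L.count b = 0 := List.count_eq_zero.mpr ha
    rw [h0] at hLb
    rw [List.count_cons_self, h0, hM, hk, Multiset.count_cons_self]
    omega
  · rw [List.count_cons_of_ne hb.symm, hM, hk, Multiset.count_cons_of_ne hb, hLb]
    omega

lemma exists_ofFn_eq {l : List V} {n : ℕ} (h : l.length = n) :
    ∃ w : Fin n → V, List.ofFn w = l := by
  subst h
  exact ⟨_, List.ofFn_getElem⟩

lemma le_of_count_eq_mod_two {α : Type*} [DecidableEq α] {M N : Multiset α}
    (h : ∀ a, N.count a = M.count a % 2) : N ≤ M :=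
  Multiset.le_iff_count.mpr fun a => h a ▸ Nat.mod_le _ _

lemma sum_map_eq_zero_of_even_count {α A : Type*} [DecidableEq α] [AddCommMonoid A]
    [Module (ZMod 2) A] (f : α → A) {N : Multiset α} (h : ∀ a, Even (N.count a)) :
    (N.map f).sum = 0 := by
  rw [Finset.sum_multiset_map_count]
  refine Finset.sum_eq_zero fun a _ => ?_
  obtain ⟨k, hk⟩ := h a
  rw [hk, add_nsmul, ← nsmul_add, ← two_nsmul, ← Nat.cast_smul_eq_nsmul (ZMod 2) 2,
    show ((2 : ℕ) : ZMod 2) = 0 from rfl, zero_smul, nsmul_zero]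

def edgeList : List V → List (Sym2 V)
  | a :: b :: l => s(a, b) :: edgeList (b :: l)
  | _ => []

@[simp] lemma edgeList_singleton (a : V) : edgeList [a] = [] := rfl

@[simp] lemma edgeList_cons_cons (a b : V) (l : List V) :
    edgeList (a :: b :: l) = s(a, b) :: edgeList (b :: l) := rfl

lemma length_edgeList : ∀ l : List V, (edgeList l).length = l.length - 1
  | [] | [_] => rfl
  | a :: b :: l => by simp [length_edgeList (b :: l)]

lemma edgeList_append {A B : List V} {a b : V} (ha : A.getLast? = some a)
    (hb : B.head? = some b) : edgeList (A ++ B) = edgeList A ++ s(a, b) :: edgeList B := by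
  obtain ⟨B, rfl⟩ : ∃ B', B = b :: B' := List.head?_eq_some_iff.mp hb
  induction A with
  | nil => simp at ha
  | cons x A ih =>
    cases A with
    | nil =>
      obtain rfl : x = a := by simpa using ha
      rfl
    | cons y A =>
      rw [List.cons_append, List.cons_append, edgeList_cons_cons, ← List.cons_append,
        ih (by simpa using ha)]
      rfl

lemma edgeList_reverse : ∀ l : List V, edgeList l.reverse = (edgeList l).reverse
  | [] | [_] => rfl
  | a :: b :: l => by
    rw [List.reverse_cons, edgeList_append (List.getLast?_reverse) rfl, edgeList_reverse (b :: l)]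
    simp [Sym2.eq_swap]

lemma mem_of_mem_edgeList : ∀ {l : List V} {e : Sym2 V} {v : V},
    e ∈ edgeList l → v ∈ e → v ∈ l
  | a :: b :: l, e, v, he, hv => by
    rcases List.mem_cons.mp he with rfl | he
    · rcases Sym2.mem_iff.mp hv with rfl | rfl <;> simp
    · exact List.mem_cons_of_mem _ (mem_of_mem_edgeList he hv)

lemma edgeList_ofFn {ℓ : ℕ} (w : Fin (ℓ + 1) → V) :
    edgeList (List.ofFn w) = List.ofFn fun i : Fin ℓ => s(w i.castSucc, w i.succ) := by
  induction ℓ with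
  | zero => rfl
  | succ ℓ ih =>
    rw [List.ofFn_succ, List.ofFn_succ, List.ofFn_succ, edgeList_cons_cons,
      ← List.ofFn_succ (f := fun i => w i.succ), ih]
    simp

lemma coe_add_coe_eq_sum_edgeList {l : List V} {a b : V} (ha : l.head? = some a)
    (hb : l.getLast? = some b) :
    (l : Multiset V) + l = a ::ₘ b ::ₘ ((edgeList l).map Sym2.toMultiset).sum := by
  induction l generalizing a with
  | nil => simp at ha
  | cons x l ih =>
    obtain rfl : x = a := by simpa using ha
    cases l with
    | nil =>
      obtain rfl : x = b := by simpa using hb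
      rfl
    | cons y l =>
      rw [edgeList_cons_cons, List.map_cons, List.sum_cons, ← Multiset.cons_coe,
        Multiset.cons_add, Multiset.add_cons, ih rfl (by simpa using hb)]
      simp only [Sym2.toMultiset, Sym2.lift_mk]
      simp only [← Multiset.singleton_add, ← Multiset.cons_coe, Multiset.coe_nil]
      abel

lemma coe_le_coe_of_edgeList_le {l l' : List V} {a b : V} (ha : l.head? = some a)
    (ha' : l'.head? = some a) (hb : l.getLast? = some b) (hb' : l'.getLast? = some b)
    (h : (edgeList l : Multiset (Sym2 V)) ≤ edgeList l') : (l : Multiset V) ≤ l' := by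
  obtain ⟨D, hD⟩ := Multiset.le_iff_exists_add.mp h
  have hdouble : (l : Multiset V) + l ≤ l' + l' := by
    rw [coe_add_coe_eq_sum_edgeList ha hb, coe_add_coe_eq_sum_edgeList ha' hb',
      ← Multiset.sum_coe, ← Multiset.sum_coe, ← Multiset.map_coe, ← Multiset.map_coe, hD,
      Multiset.map_add, Multiset.sum_add]
    exact Multiset.cons_le_cons _ (Multiset.cons_le_cons _ le_self_add)
  rw [Multiset.le_iff_count] at hdouble ⊢
  intro v
  have := hdouble v
  simp only [Multiset.count_add] at this
  omega

lemma eq_of_nodup_of_edgeList_eq : ∀ {l l' : List V}, l.Nodup → l'.head? = l.head? →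
    (edgeList l' : Multiset (Sym2 V)) = edgeList l → l' = l
  | [], _, _, hh, _ => List.head?_eq_none_iff.mp hh
  | [a], l', _, hh, he => by
    obtain ⟨l', rfl⟩ := List.head?_eq_some_iff.mp hh
    cases l' with
    | nil => rfl
    | cons => simp at he
  | a :: b :: l, l', hnd, hh, he => by
    obtain ⟨_ | ⟨c, l'⟩, rfl⟩ := List.head?_eq_some_iff.mp hh
    · exact absurd (congrArg Multiset.card he) (by simp)
    have ha : a ∉ b :: l := (List.nodup_cons.mp hnd).1
    have hc : c = b := by
      have hmem : s(a, c) ∈ (edgeList (a :: b :: l) : Multiset (Sym2 V)) := by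
        rw [← he]; simp
      rcases List.mem_cons.mp (Multiset.mem_coe.mp hmem) with h | h
      · rcases Sym2.eq_iff.mp h with ⟨-, rfl⟩ | ⟨rfl, -⟩
        · rfl
        · simp at ha
      · exact absurd (mem_of_mem_edgeList h (Sym2.mem_mk_left a c)) ha
    subst hc
    simp only [edgeList_cons_cons, ← Multiset.cons_coe, Multiset.cons_inj_right] at he
    rw [eq_of_nodup_of_edgeList_eq (l := c :: l) (l' := c :: l') (List.Nodup.of_cons hnd) rfl he]

lemma even_count_edgeList_of_palindrome {G : SimpleGraph V} {l : List V} (hp : l.Palindrome)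
    (hc : l.IsChain G.Adj) (e : Sym2 V) : Even ((edgeList l).count e) := by
  induction hp with
  | nil | singleton => exact ⟨0, rfl⟩
  | @cons_concat x m hm ih =>
    cases m with
    | nil => exact absurd (List.isChain_pair.mp hc) (G.loopless.irrefl x)
    | cons y m =>
      have hlast : (y :: m).getLast? = some y := by
        rw [← List.head?_reverse, hm.reverse_eq]; rfl
      have hcm : (y :: m).IsChain G.Adj := hc.tail.left_of_append
      rw [List.cons_append, edgeList_cons_cons, ← List.cons_append, edgeList_append hlast rfl]
      simp only [edgeList_singleton, List.count_cons, List.count_append, List.count_nil,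
        Sym2.eq_swap (a := y)]
      obtain ⟨k, hk⟩ := ih hcm
      split_ifs
      · exact ⟨k + 1, by omega⟩
      · exact ⟨k, by omega⟩

noncomputable def afterLast (s : V) (l : List V) : List V := (l.reverse.takeWhile (· ≠ s)).reverse

noncomputable def beforeLast (s : V) (l : List V) : List V := (l.reverse.dropWhile (· ≠ s)).reverse

lemma beforeLast_append_afterLast (s : V) (l : List V) : beforeLast s l ++ afterLast s l = l := by
  rw [beforeLast, afterLast, ← List.reverse_append, List.takeWhile_append_dropWhile,
    List.reverse_reverse]

lemma notMem_afterLast (s : V) (l : List V) : s ∉ afterLast s l := fun h => by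
  simpa using List.mem_takeWhile_imp (List.mem_reverse.mp h)

lemma getLast?_beforeLast {s : V} {l : List V} (h : s ∈ l) :
    (beforeLast s l).getLast? = some s := by
  have hne : l.reverse.dropWhile (· ≠ s) ≠ [] := by
    rw [Ne, List.dropWhile_eq_nil_iff]
    exact fun hall => by simpa using hall s (List.mem_reverse.mpr h)
  rw [beforeLast, List.getLast?_reverse, List.head?_eq_some_head hne]
  simpa using List.head_dropWhile_not _ hne

lemma beforeLast_append_afterLast_append {s : V} {A B : List V} (hA : A.getLast? = some s)
    (hB : s ∉ B) : beforeLast s (A ++ B) = A ∧ afterLast s (A ++ B) = B := by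
  obtain ⟨A', hA'⟩ := List.head?_eq_some_iff.mp (List.head?_reverse.trans hA)
  have hall : ∀ x ∈ B.reverse, decide (x ≠ s) = true := fun x hx =>
    decide_eq_true fun h => hB (h ▸ List.mem_reverse.mp hx)
  rw [beforeLast, afterLast, List.reverse_append, List.takeWhile_append_of_pos hall,
    List.dropWhile_append_of_pos hall, hA', List.dropWhile_cons_of_neg (by simp),
    List.takeWhile_cons_of_neg (by simp), ← hA']
  simp

variable {G : SimpleGraph V}

def IsWalkList (G : SimpleGraph V) (s t : V) (l : List V) : Prop :=
  l.head? = some s ∧ l.getLast? = some t ∧ l.IsChain G.Adj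

lemma IsWalkList.reverse {s t : V} {l : List V} (h : IsWalkList G s t l) :
    IsWalkList G t s l.reverse :=
  ⟨by rw [List.head?_reverse, h.2.1], by rw [List.getLast?_reverse, h.1],
    List.isChain_reverse.mpr (h.2.2.imp fun _ _ hab => hab.symm)⟩

lemma IsWalkList.append {s a b t : V} {A B : List V} (hA : IsWalkList G s a A)
    (hB : IsWalkList G b t B) (hab : G.Adj a b) : IsWalkList G s t (A ++ B) :=
  ⟨by rw [List.head?_append, hA.1]; rfl, by rw [List.getLast?_append, hB.2.1]; rfl,
    List.isChain_append.mpr ⟨hA.2.2, hB.2.2, fun x hx y hy => by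
      obtain rfl : a = x := Option.some_inj.mp (hA.2.1.symm.trans hx)
      obtain rfl : b = y := Option.some_inj.mp (hB.1.symm.trans hy)
      exact hab⟩⟩

lemma IsWalkList.notMem_of_edgeList_le {s t v : V} {l l' : List V} (hl : IsWalkList G s t l)
    (hl' : IsWalkList G s t l') (hle : (edgeList l : Multiset (Sym2 V)) ≤ edgeList l')
    (hv : v ∉ l') : v ∉ l := fun h => hv <| Multiset.mem_coe.mp <|
  Multiset.mem_of_le (coe_le_coe_of_edgeList_le hl.1 hl'.1 hl.2.1 hl'.2.1 hle) h

section WalksWith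

variable [Fintype V]

-- Indexing by `Fin (card M + 1)` only bounds the length, which makes the set finite.
noncomputable def walksWith (G : SimpleGraph V) (M : Multiset (Sym2 V)) (s t : V) :
    Finset (List V) :=
  (univ.image fun w : Fin (Multiset.card M + 1) → V => List.ofFn w).filter
    fun l => IsWalkList G s t l ∧ (edgeList l : Multiset (Sym2 V)) = M

lemma mem_walksWith {M : Multiset (Sym2 V)} {s t : V} {l : List V} :
    l ∈ walksWith G M s t ↔ IsWalkList G s t l ∧ (edgeList l : Multiset (Sym2 V)) = M := by
  refine ⟨fun h => (Finset.mem_filter.mp h).2, fun h => Finset.mem_filter.mpr ⟨?_, h⟩⟩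
  have hlen : l.length = Multiset.card M + 1 := by
    have hl : l ≠ [] := by rintro rfl; simp [IsWalkList] at h
    rw [← h.2, Multiset.coe_card, length_edgeList]
    have := List.length_pos_iff.mpr hl
    omega
  obtain ⟨w, rfl⟩ := exists_ofFn_eq hlen
  exact Finset.mem_image_of_mem _ (Finset.mem_univ w)

/-- Reversal is an involution on closed walks; its fixed points are palindromes, whose edges all
occur an even number of times. -/
lemma even_count_of_odd_card_walksWith_self {M : Multiset (Sym2 V)} {a : V}
    (hodd : Odd #(walksWith G M a a)) (e : Sym2 V) : Even (M.count e) := by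
  by_contra he
  refine Nat.not_even_iff_odd.mpr hodd (even_card_of_involution List.reverse (fun l hl => ?_)
    (fun l _ => List.reverse_reverse l) (fun l hl hrev => he ?_))
  · obtain ⟨hw, hM⟩ := mem_walksWith.mp hl
    exact mem_walksWith.mpr ⟨hw.reverse, by rw [edgeList_reverse, Multiset.coe_reverse, hM]⟩
  · obtain ⟨hw, rfl⟩ := mem_walksWith.mp hl
    rw [Multiset.coe_count]
    exact even_count_edgeList_of_palindrome (List.Palindrome.iff_reverse_eq.mpr hrev) hw.2.2 e

lemma walksWith_edgeList_eq_singleton {s t : V} {P : List V} (hP : IsWalkList G s t P)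
    (hnd : P.Nodup) : walksWith G (edgeList P) s t = {P} := by
  ext l
  rw [mem_walksWith, Finset.mem_singleton]
  exact ⟨fun h => eq_of_nodup_of_edgeList_eq hnd (h.1.1.trans hP.1.symm) h.2,
    by rintro rfl; exact ⟨hP, rfl⟩⟩

section LastVisit

noncomputable def lastExcursion (s : V) (l : List V) : Option V × Multiset (Sym2 V) :=
  ((afterLast s l).head?, edgeList (afterLast s l))

variable {M N : Multiset (Sym2 V)} {s t u : V}

lemma exists_afterLast_eq_cons {l : List V} (hst : s ≠ t) (hl : l ∈ walksWith G M s t) :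
    ∃ u B, afterLast s l = u :: B ∧ G.Adj s u ∧
      beforeLast s l ∈ walksWith G (M - s(s, u) ::ₘ edgeList (u :: B)) s s ∧
      u :: B ∈ walksWith G (edgeList (u :: B)) u t ∧ s(s, u) ::ₘ edgeList (u :: B) ≤ M := by
  obtain ⟨⟨hs, ht, hc⟩, hM⟩ := mem_walksWith.mp hl
  have hA := getLast?_beforeLast (List.mem_of_mem_head? hs)
  have hsplit := beforeLast_append_afterLast s l
  obtain ⟨u, B, hB⟩ : ∃ u B, afterLast s l = u :: B := by
    refine List.exists_cons_of_ne_nil fun h => hst ?_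
    rw [← hsplit, h, List.append_nil, hA] at ht
    exact Option.some_inj.mp ht
  rw [← hsplit, hB] at hs ht hc hM
  obtain ⟨hcA, hcB, hglue⟩ := List.isChain_append.mp hc
  have hadj : G.Adj s u := hglue s hA u rfl
  rw [edgeList_append hA rfl, ← Multiset.coe_add, ← Multiset.cons_coe] at hM
  refine ⟨u, B, hB, hadj, mem_walksWith.mpr ⟨⟨?_, hA, hcA⟩, ?_⟩,
    mem_walksWith.mpr ⟨⟨rfl, ?_, hcB⟩, rfl⟩, hM ▸ le_add_self⟩
  · obtain ⟨x, A', hxA⟩ := List.exists_cons_of_ne_nil (l := beforeLast s l)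
      (by rintro h; simp [h] at hA)
    rw [hxA] at hs ⊢
    simpa using hs
  · rw [← hM, add_tsub_cancel_right]
  · simpa [List.getLast?_append] using ht

lemma card_filter_lastExcursion_eq {B₀ : List V} (hadj : G.Adj s u)
    (hle : s(s, u) ::ₘ N ≤ M) (hB₀ : u :: B₀ ∈ walksWith G N u t) (hsB₀ : s ∉ u :: B₀) :
    #{l ∈ walksWith G M s t | lastExcursion s l = (some u, N)} =
      #(walksWith G (M - s(s, u) ::ₘ N) s s) * #(walksWith G N u t) := by
  have hst : s ≠ t := fun h => hsB₀ (h ▸ List.mem_of_getLast? (mem_walksWith.mp hB₀).1.2.1)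
  have hsB : ∀ B ∈ walksWith G N u t, s ∉ B := fun B hB =>
    (mem_walksWith.mp hB).1.notMem_of_edgeList_le (mem_walksWith.mp hB₀).1
      ((mem_walksWith.mp hB).2.trans (mem_walksWith.mp hB₀).2.symm).le hsB₀
  rw [← Finset.card_product]
  refine Finset.card_nbij' (fun l => (beforeLast s l, afterLast s l)) (fun p => p.1 ++ p.2)
    (fun l hl => ?_) (fun p hp => ?_) (fun l _ => beforeLast_append_afterLast s l)
    (fun p hp => ?_)
  · obtain ⟨hl, hκ⟩ := Finset.mem_filter.mp hl
    obtain ⟨u', B, hB, -, hA, hB', -⟩ := exists_afterLast_eq_cons hst hl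
    simp only [lastExcursion, hB, List.head?_cons, Prod.mk.injEq, Option.some_inj] at hκ
    obtain ⟨rfl, hN⟩ := hκ
    rw [hN] at hA hB'
    simpa [hB] using And.intro hA hB'
  · obtain ⟨hA, hB⟩ := Finset.mem_product.mp hp
    obtain ⟨hAw, hAM⟩ := mem_walksWith.mp hA
    obtain ⟨hBw, hBN⟩ := mem_walksWith.mp hB
    have hsplit := beforeLast_append_afterLast_append hAw.2.1 (hsB _ hB)
    refine Finset.mem_filter.mpr ⟨mem_walksWith.mpr ⟨hAw.append hBw hadj, ?_⟩, ?_⟩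
    · rw [edgeList_append hAw.2.1 hBw.1, ← Multiset.coe_add, ← Multiset.cons_coe, hAM, hBN,
        tsub_add_cancel_of_le hle]
    · simp [lastExcursion, hsplit.2, hBw.1, hBN]
  · obtain ⟨hA, hB⟩ := Finset.mem_product.mp hp
    have hsplit := beforeLast_append_afterLast_append (mem_walksWith.mp hA).1.2.1 (hsB _ hB)
    simp [hsplit]

end LastVisit

/-- For `s ≠ t`, group the walks by their part after the last visit to `s`. An odd group is the
product of a set of closed walks at `s`, whose edges then all have even multiplicity, and of a set
of walks that never return to `s`, to which induction applies. -/
theorem exists_nodup_of_odd_card_walksWith (M : Multiset (Sym2 V)) (s t : V)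
    (hodd : Odd #(walksWith G M s t)) :
    ∃ P, IsWalkList G s t P ∧ P.Nodup ∧ ∀ e, (edgeList P).count e = M.count e % 2 := by
  induction hn : Multiset.card M using Nat.strong_induction_on generalizing M s with
  | _ n ih =>
  rcases eq_or_ne s t with rfl | hst
  · refine ⟨[s], ⟨rfl, rfl, List.isChain_singleton s⟩, List.nodup_singleton s, fun e => ?_⟩
    simp [Nat.even_iff.mp (even_count_of_odd_card_walksWith_self hodd e)]
  obtain ⟨l₀, hl₀, hfib⟩ := exists_odd_card_fiber (lastExcursion s) hodd
  obtain ⟨u, B₀, hB, hadj, -, hB₀, hle⟩ := exists_afterLast_eq_cons hst hl₀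
  set N : Multiset (Sym2 V) := ↑(edgeList (u :: B₀))
  have hsB₀ : s ∉ u :: B₀ := hB ▸ notMem_afterLast s l₀
  have hκ : lastExcursion s l₀ = (some u, N) := by simp [lastExcursion, hB, N]
  rw [hκ, card_filter_lastExcursion_eq hadj hle hB₀ hsB₀, Nat.odd_mul] at hfib
  have hlt : Multiset.card N < n := by
    have := Multiset.card_le_card hle
    rw [Multiset.card_cons] at this
    omega
  obtain ⟨P, hP, hPnd, hPc⟩ := ih _ hlt N u hfib.2 rfl
  have hsP : s ∉ P := hP.notMem_of_edgeList_le (mem_walksWith.mp hB₀).1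
    (le_of_count_eq_mod_two fun e => (Multiset.coe_count e _).trans (hPc e)) hsB₀
  obtain ⟨P', rfl⟩ := List.head?_eq_some_iff.mp hP.1
  refine ⟨s :: u :: P', IsWalkList.append (A := [s]) ⟨rfl, rfl, List.isChain_singleton s⟩ hP hadj,
    List.nodup_cons.mpr ⟨hsP, hPnd⟩, ?_⟩
  rw [edgeList_cons_cons]
  exact count_cons_eq_count_mod_two hle (even_count_of_odd_card_walksWith_self hfib.1) hPc
    fun h => hsP (mem_of_mem_edgeList h (Sym2.mem_mk_left s u))

end WalksWith

section Feasibility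

variable {G : SimpleGraph V} {s t : V} {A ι : Type*} [AddCommMonoid A] {g : Sym2 V → A} {c : A}
  {X : ι → Set V}

def IsFeasibleWalkList (G : SimpleGraph V) (s t : V) (g : Sym2 V → A) (c : A) (X : ι → Set V)
    (l : List V) : Prop :=
  IsWalkList G s t l ∧ ((edgeList l : Multiset (Sym2 V)).map g).sum = c ∧
    ∀ i, (l : Multiset V).countP (· ∈ X i) ≤ 1

lemma IsFeasibleWalkList.of_edgeList_le [Module (ZMod 2) A] {W P : List V}
    (hW : IsFeasibleWalkList G s t g c X W) (hP : IsWalkList G s t P)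
    (hle : (edgeList P : Multiset (Sym2 V)) ≤ edgeList W)
    (heven : ∀ e, Even ((edgeList W).count e - (edgeList P).count e)) :
    IsFeasibleWalkList G s t g c X P := by
  obtain ⟨hWw, hWc, hWX⟩ := hW
  refine ⟨hP, ?_, fun i => (Multiset.countP_le_of_le _ ?_).trans (hWX i)⟩
  · have hzero : ((↑(edgeList W) - ↑(edgeList P) : Multiset (Sym2 V)).map g).sum = 0 :=
      sum_map_eq_zero_of_even_count g fun e => by
        rw [Multiset.count_sub, Multiset.coe_count, Multiset.coe_count]
        exact heven e
    rw [← hWc, ← tsub_add_cancel_of_le hle, Multiset.map_add, Multiset.sum_add, hzero, zero_add]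
  · exact coe_le_coe_of_edgeList_le hP.1 hWw.1 hP.2.1 hWw.2.1 hle

lemma isWalk_iff_isWalkList_ofFn {ℓ : ℕ} (w : Fin (ℓ + 1) → V) :
    IsWalk G s t w ↔ IsWalkList G s t (List.ofFn w) := by
  have hlast : (List.ofFn w).getLast? = some (w (Fin.last ℓ)) := by
    rw [List.getLast?_eq_getElem?, List.getElem?_ofFn]
    simp [Fin.last]
  rw [IsWalk, IsWalkList, hlast, List.ofFn_succ, List.head?_cons, ← List.ofFn_succ,
    List.isChain_ofFn, Option.some_inj, Option.some_inj, Fin.forall_iff]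
  simp only [Nat.add_lt_add_iff_right]
  rfl

lemma countP_ofFn_le_one_iff {n : ℕ} (w : Fin n → V) (S : Set V) :
    (List.ofFn w : Multiset V).countP (· ∈ S) ≤ 1 ↔ ∀ j j', w j ∈ S → w j' ∈ S → j = j' := by
  rw [← Fin.univ_val_map, Multiset.countP_map]
  change #{j | w j ∈ S} ≤ 1 ↔ _
  simp only [Finset.card_le_one, Finset.mem_filter, Finset.mem_univ, true_and]
  exact ⟨fun h j j' hj hj' => h j hj j' hj', fun h j hj j' hj' => h j j' hj hj'⟩

lemma feasible_iff_isFeasibleWalkList_ofFn {d p ℓ : ℕ} {g : Sym2 V → (Fin d → ZMod 2)}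
    {c : Fin d → ZMod 2} {X : Fin p → Set V} (w : Fin (ℓ + 1) → V) :
    Feasible G s t g c X w ↔ IsFeasibleWalkList G s t g c X (List.ofFn w) := by
  rw [Feasible, IsFeasibleWalkList, isWalk_iff_isWalkList_ofFn, edgeList_ofFn, Multiset.map_coe,
    Multiset.sum_coe, List.map_ofFn, List.sum_ofFn]
  simp only [countP_ofFn_le_one_iff]
  rfl

lemma walkMono_eq_monomial (F : Type*) [Field F] {ℓ : ℕ} (w : Fin (ℓ + 1) → V) :
    walkMono F w = MvPolynomial.monomial (Multiset.toFinsupp (edgeList (List.ofFn w))) 1 := by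
  rw [walkMono, edgeList_ofFn, ← Fin.univ_val_map, ← Multiset.sum_map_singleton
    (Multiset.map _ _), Multiset.map_map, ← Finset.sum_eq_multiset_sum, map_sum,
    MvPolynomial.monomial_sum_one]
  simp only [Function.comp_apply, Multiset.toFinsupp_singleton]
  rfl

end Feasibility

section Polynomial

variable [Fintype V] {G : SimpleGraph V} {s t : V} {d p : ℕ} {g : Sym2 V → (Fin d → ZMod 2)}
  {c : Fin d → ZMod 2} {X : Fin p → Set V} (F : Type*) [Field F]

lemma coeff_polyC (ℓ : ℕ) (M : Multiset (Sym2 V)) :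
    (polyC F G s t g c X ℓ).coeff (Multiset.toFinsupp M) =
      #{w : Fin (ℓ + 1) → V |
        Feasible G s t g c X w ∧ (edgeList (List.ofFn w) : Multiset _) = M} := by
  rw [polyC, ← Finset.coe_filter_univ, finsum_mem_coe_finset, MvPolynomial.coeff_sum]
  simp only [walkMono_eq_monomial, MvPolynomial.coeff_monomial,
    (Multiset.toFinsupp (α := Sym2 V)).injective.eq_iff]
  rw [Finset.sum_boole, Finset.filter_filter]

lemma card_feasible_eq_card_walksWith {ℓ : ℕ} {M : Multiset (Sym2 V)} {w₀ : Fin (ℓ + 1) → V}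
    (hw₀ : Feasible G s t g c X w₀) (hM : (edgeList (List.ofFn w₀) : Multiset _) = M) :
    #{w : Fin (ℓ + 1) → V | Feasible G s t g c X w ∧ (edgeList (List.ofFn w) : Multiset _) = M} =
      #(walksWith G M s t) := by
  obtain rfl : Multiset.card M = ℓ := by simp [← hM, length_edgeList]
  rw [walksWith, Finset.filter_image, Finset.card_image_of_injective _ List.ofFn_injective]
  congr 1
  ext w
  simp only [Finset.mem_filter, Finset.mem_univ, true_and, feasible_iff_isFeasibleWalkList_ofFn]
  rw [feasible_iff_isFeasibleWalkList_ofFn] at hw₀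
  refine ⟨fun h => ⟨h.1.1, h.2⟩, fun h => ⟨hw₀.of_edgeList_le h.1 (h.2.trans hM.symm).le ?_, h.2⟩⟩
  intro e
  rw [← Multiset.coe_count, ← Multiset.coe_count, h.2, hM, Nat.sub_self]
  exact ⟨0, rfl⟩

theorem polyC_ne_zero_of_feasible_of_injective {ℓ : ℕ} {w : Fin (ℓ + 1) → V}
    (hw : Feasible G s t g c X w) (hinj : Function.Injective w) : polyC F G s t g c X ℓ ≠ 0 := by
  intro h
  have hcoeff := congrArg (MvPolynomial.coeff (Multiset.toFinsupp (edgeList (List.ofFn w)))) h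
  have hP := ((feasible_iff_isFeasibleWalkList_ofFn w).mp hw).1
  rw [coeff_polyC, card_feasible_eq_card_walksWith hw rfl,
    walksWith_edgeList_eq_singleton hP (List.nodup_ofFn.mpr hinj), Finset.card_singleton,
    MvPolynomial.coeff_zero] at hcoeff
  exact one_ne_zero (Nat.cast_one.symm.trans hcoeff)

theorem exists_feasible_injective_of_polyC_ne_zero [CharP F 2] {ℓ : ℕ}
    (h : polyC F G s t g c X ℓ ≠ 0) :
    ∃ ℓ' ≤ ℓ, ∃ w : Fin (ℓ' + 1) → V, Feasible G s t g c X w ∧ Function.Injective w := by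
  obtain ⟨d, hd⟩ := MvPolynomial.ne_zero_iff.mp h
  obtain ⟨M, rfl⟩ := Multiset.toFinsupp.surjective d
  rw [coeff_polyC, Ne, CharP.cast_eq_zero_iff F 2, ← even_iff_two_dvd, Nat.not_even_iff_odd] at hd
  obtain ⟨w₀, hw₀⟩ := Finset.card_pos.mp hd.pos
  obtain ⟨hw₀f, hw₀M⟩ := (Finset.mem_filter.mp hw₀).2
  rw [card_feasible_eq_card_walksWith hw₀f hw₀M] at hd
  obtain ⟨P, hP, hPnd, hPc⟩ := exists_nodup_of_odd_card_walksWith M s t hd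
  have hle : (edgeList P : Multiset (Sym2 V)) ≤ M :=
    le_of_count_eq_mod_two fun e => (Multiset.coe_count e _).trans (hPc e)
  obtain ⟨n, hn⟩ : ∃ n, P.length = n + 1 :=
    Nat.exists_eq_add_one.mpr (List.length_pos_iff.mpr fun h => by simp [h, IsWalkList] at hP)
  obtain ⟨w, rfl⟩ := exists_ofFn_eq hn
  refine ⟨n, ?_, w, ?_, List.nodup_ofFn.mp hPnd⟩
  · have := Multiset.card_le_card hle
    rw [← hw₀M] at this
    simpa [length_edgeList] using this
  · rw [feasible_iff_isFeasibleWalkList_ofFn] at hw₀f ⊢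
    refine hw₀f.of_edgeList_le hP (hle.trans_eq hw₀M.symm) fun e => ?_
    rw [hPc, ← Multiset.coe_count, hw₀M]
    exact ⟨M.count e / 2, by omega⟩

end Polynomial

end WalkPolynomial

open WalkPolynomial in
theorem stmt4_general {V : Type*} [Fintype V] (G : SimpleGraph V) (s t : V)
    (d p : ℕ) (g : Sym2 V → (Fin d → ZMod 2)) (c : Fin d → ZMod 2)
    (X : Fin p → Set V) (F : Type*) [Field F] [CharP F 2] :
    ((∃ ℓ : ℕ, ∃ w : Fin (ℓ + 1) → V, Feasible G s t g c X w ∧ Function.Injective w) ↔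
      (∃ ℓ : ℕ, polyC F G s t g c X ℓ ≠ 0)) ∧
    ((∃ ℓ : ℕ, ∃ w : Fin (ℓ + 1) → V, Feasible G s t g c X w ∧ Function.Injective w) →
      sInf {ℓ : ℕ | ∃ w : Fin (ℓ + 1) → V, Feasible G s t g c X w ∧ Function.Injective w} =
        sInf {ℓ : ℕ | polyC F G s t g c X ℓ ≠ 0}) := by
  have path_poly : ∀ ℓ, (∃ w : Fin (ℓ + 1) → V, Feasible G s t g c X w ∧ Function.Injective w) →
      polyC F G s t g c X ℓ ≠ 0 := fun ℓ ⟨w, hw, hinj⟩ =>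
    polyC_ne_zero_of_feasible_of_injective F hw hinj
  have poly_path : ∀ ℓ, polyC F G s t g c X ℓ ≠ 0 → ∃ ℓ' ≤ ℓ,
      ∃ w : Fin (ℓ' + 1) → V, Feasible G s t g c X w ∧ Function.Injective w := fun ℓ h =>
    exists_feasible_injective_of_polyC_ne_zero F h
  refine ⟨⟨fun ⟨ℓ, hℓ⟩ => ⟨ℓ, path_poly ℓ hℓ⟩, fun ⟨ℓ, hℓ⟩ => ?_⟩, fun _ => ?_⟩
  · obtain ⟨ℓ', -, hℓ'⟩ := poly_path ℓ hℓ
    exact ⟨ℓ', hℓ'⟩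
  · refine csInf_eq_csInf_of_forall_exists_le (fun ℓ hℓ => ⟨ℓ, path_poly ℓ hℓ, le_rfl⟩)
      fun ℓ hℓ => ?_
    obtain ⟨ℓ', hle, hℓ'⟩ := poly_path ℓ hℓ
    exact ⟨ℓ', hℓ', hle⟩

theorem stmt4 {V : Type*} [Fintype V] (G : SimpleGraph V) (s t : V) (hst : s ≠ t)
    (d p : ℕ) (g : Sym2 V → (Fin d → ZMod 2)) (c : Fin d → ZMod 2)
    (X : Fin p → Set V) (F : Type*) [Field F] [CharP F 2] :
    ((∃ ℓ : ℕ, ∃ w : Fin (ℓ + 1) → V, Feasible G s t g c X w ∧ Function.Injective w) ↔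
      (∃ ℓ : ℕ, polyC F G s t g c X ℓ ≠ 0)) ∧
    ((∃ ℓ : ℕ, ∃ w : Fin (ℓ + 1) → V, Feasible G s t g c X w ∧ Function.Injective w) →
      sInf {ℓ : ℕ | ∃ w : Fin (ℓ + 1) → V, Feasible G s t g c X w ∧ Function.Injective w} =
        sInf {ℓ : ℕ | polyC F G s t g c X ℓ ≠ 0}) :=
  stmt4_general G s t d p g c X F
end

section
/- If there is no feasible s-t-path of length at most ℓ, then there exists a function φ : C_ℓ → C_ℓ such that for every W ∈ C_ℓ: (1) φ(φ(W)) = W, (2) φ(W) ≠ W, and (3) the multiset of edges traversed by φ(W) (counted with multiplicity) equals the multiset of edges traversed by W. -/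
/-- The multiset of edges traversed by a walk, counted with multiplicity. -/
def edgeMultiset {V : Type*} {ℓ : ℕ} (w : Fin (ℓ + 1) → V) : Multiset (Sym2 V) :=
  (Finset.univ : Finset (Fin ℓ)).val.map fun i => s(w i.castSucc, w i.succ)

/-!
A walk is encoded by its list of vertices. The involution `flipLoop` scans the walk from its
start: at the current vertex `x`, if `x` occurs again, look at the closed subwalk from `x` to
its next occurrence. If this closed walk is not a palindrome, reverse it and stop; otherwise
keep it and continue the scan from the next occurrence of `x`. If `x` does not occur again,
step forward. Reversing a closed subwalk preserves endpoints, adjacency, the vertex multiset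
and the edge multiset, and the scan of the image stops at the same place, so `flipLoop` is an
involution on feasible walks preserving the edge multiset.

At a fixed point every closed subwalk met by the scan is a palindrome. Deleting these leaves
an `s`-`t`-path through a subset of the vertices, and a palindromic closed walk without loops
traverses each edge an even number of times, so in the group `(ZMod 2)^d` the path has the
same label sum as the walk: it is a feasible path of length at most `ℓ`.
-/

namespace WalkList

variable {V : Type*}

def edges : List V → List (Sym2 V)
  | x :: y :: l => s(x, y) :: edges (y :: l)
  | _ => []

@[simp] lemma edges_singleton (x : V) : edges [x] = [] := rfl

@[simp] lemma edges_cons_cons (x y : V) (l : List V) :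
    edges (x :: y :: l) = s(x, y) :: edges (y :: l) := rfl

lemma edges_cons (x : V) (l : List V) :
    edges (x :: l) = (l.head?.map fun y => s(x, y)).toList ++ edges l := by
  cases l <;> rfl

lemma edges_append_cons (A : List V) (x : V) (B : List V) :
    edges (A ++ x :: B) = edges (A ++ [x]) ++ edges (x :: B) := by
  induction A with
  | nil => simp
  | cons a A ih => cases A <;> simp_all

lemma edges_reverse (l : List V) : edges l.reverse = (edges l).reverse := by
  induction l with
  | nil => rfl
  | cons x l ih =>
    cases l with
    | nil => rfl
    | cons y l =>
      have hrev : (x :: y :: l).reverse = l.reverse ++ y :: [x] := by simp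
      rw [hrev, edges_append_cons, ← List.reverse_cons, ih]
      simp [Sym2.eq_swap]

lemma edges_ofFn {n : ℕ} (w : Fin (n + 1) → V) :
    edges (List.ofFn w) = List.ofFn fun i : Fin n => s(w i.castSucc, w i.succ) := by
  induction n with
  | zero => simp
  | succ n ih =>
    rw [List.ofFn_succ, edges_cons, ih, List.ofFn_succ (n := n)]
    simp [List.ofFn_succ]

lemma edgeMultiset_eq_edges_ofFn {n : ℕ} (w : Fin (n + 1) → V) :
    edgeMultiset w = (edges (List.ofFn w) : Multiset (Sym2 V)) := by
  rw [edges_ofFn, ← Fin.univ_val_map]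
  rfl

lemma exists_edges_eq_add_self {I : List V} (hI : I.Palindrome) {x : V}
    (hc : (x :: I ++ [x]).IsChain (· ≠ ·)) :
    ∃ m : Multiset (Sym2 V), (edges (x :: I ++ [x]) : Multiset (Sym2 V)) = m + m := by
  -- `hc` rules out `I` of even length: the middle edge of such a walk is a loop `s(v, v)`.
  induction hI generalizing x with
  | nil => simp at hc
  | singleton a => exact ⟨{s(x, a)}, by simp [Sym2.eq_swap]; rfl⟩
  | @cons_concat a l _ ih =>
    have hsplit : x :: a :: (l ++ [a]) ++ [x] = x :: ((a :: l) ++ a :: [x]) := by simp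
    rw [hsplit] at hc ⊢
    obtain ⟨m, hm⟩ := ih (List.isChain_split.mp hc.tail).1
    refine ⟨s(x, a) ::ₘ m, ?_⟩
    rw [List.cons_append, edges_cons_cons, ← List.cons_append, edges_append_cons,
      ← Multiset.cons_coe, ← Multiset.coe_add, hm, edges_cons_cons, edges_singleton,
      Multiset.coe_singleton, Sym2.eq_swap (a := a)]
    simp only [← Multiset.singleton_add]
    abel

section Feasible

variable {A ι : Type*} [AddCommMonoid A]

structure IsFeasible (G : SimpleGraph V) (s t : V) (g : Sym2 V → A) (c : A) (X : ι → Set V)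
    (l : List V) : Prop where
  head?_eq : l.head? = some s
  getLast?_eq : l.getLast? = some t
  isChain : l.IsChain G.Adj
  sum_edges : ((edges l : Multiset (Sym2 V)).map g).sum = c
  pairwise : ∀ i, l.Pairwise fun a b => ¬ (a ∈ X i ∧ b ∈ X i)

lemma IsFeasible.ne_nil {G : SimpleGraph V} {s t : V} {g : Sym2 V → A} {c : A}
    {X : ι → Set V} {l : List V} (h : IsFeasible G s t g c X l) : l ≠ [] := by
  rintro rfl
  simpa using h.head?_eq

lemma pairwise_ofFn_not_and_mem_iff {n : ℕ} (w : Fin n → V) (S : Set V) :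
    (List.ofFn w).Pairwise (fun a b => ¬ (a ∈ S ∧ b ∈ S)) ↔
      ∀ j j', w j ∈ S → w j' ∈ S → j = j' := by
  rw [List.pairwise_ofFn]
  refine ⟨fun h j j' hj hj' => ?_, fun h j j' hjj' hmem => hjj'.ne (h j j' hmem.1 hmem.2)⟩
  by_contra hne
  rcases lt_or_gt_of_ne hne with hlt | hlt
  exacts [h hlt ⟨hj, hj'⟩, h hlt ⟨hj', hj⟩]

theorem feasible_iff_isFeasible_ofFn {n d p : ℕ} {G : SimpleGraph V} {s t : V}
    {g : Sym2 V → (Fin d → ZMod 2)} {c : Fin d → ZMod 2} {X : Fin p → Set V}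
    (w : Fin (n + 1) → V) :
    Feasible G s t g c X w ↔ IsFeasible G s t g c X (List.ofFn w) := by
  have hhead : (List.ofFn w).head? = some (w 0) := by simp [List.ofFn_succ]
  have hlast : (List.ofFn w).getLast? = some (w (Fin.last n)) := by
    simp [List.getLast?_eq_getElem?, -List.ofFn_succ]
    rfl
  have hchain : (List.ofFn w).IsChain G.Adj ↔ ∀ i : Fin n, G.Adj (w i.castSucc) (w i.succ) := by
    rw [List.isChain_ofFn]
    exact ⟨fun h i => h i (by omega), fun h i hi => h ⟨i, by omega⟩⟩
  have hsum : ∑ i : Fin n, g s(w i.castSucc, w i.succ) = ((edgeMultiset w).map g).sum := by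
    rw [edgeMultiset, Multiset.map_map]
    rfl
  simp only [Feasible, IsWalk, hsum, edgeMultiset_eq_edges_ofFn, ← hchain,
    ← pairwise_ofFn_not_and_mem_iff]
  constructor
  · rintro ⟨⟨h0, hl, hadj⟩, hg, hX⟩
    exact ⟨hhead.trans (congrArg _ h0), hlast.trans (congrArg _ hl), hadj, hg, hX⟩
  · rintro ⟨h0, hl, hadj, hg, hX⟩
    exact ⟨⟨Option.some_injective _ (hhead.symm.trans h0),
      Option.some_injective _ (hlast.symm.trans hl), hadj⟩, hg, hX⟩

end Feasible

lemma exists_ofFn_eq_of_ne_nil {l : List V} (hl : l ≠ []) :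
    ∃ (n : ℕ) (w : Fin (n + 1) → V), List.ofFn w = l := by
  obtain ⟨a, l, rfl⟩ := List.exists_cons_of_ne_nil hl
  exact ⟨l.length, (a :: l).get, List.ofFn_get _⟩

lemma exists_eq_append_cons_notMem {x : V} {l : List V} (h : x ∈ l) :
    ∃ I T, l = I ++ x :: T ∧ x ∉ I := by
  induction l with
  | nil => simp at h
  | cons y l ih =>
    by_cases hxy : x = y
    · exact ⟨[], l, by simp [hxy], by simp⟩
    · obtain ⟨I, T, rfl, hI⟩ := ih (by simpa [hxy] using h)
      exact ⟨y :: I, T, rfl, by simp [hxy, hI]⟩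

theorem loop_induction {motive : List V → Prop} (nil : motive [])
    (cons : ∀ x l, x ∉ l → motive l → motive (x :: l))
    (loop : ∀ x I T, x ∉ I → motive (x :: T) → motive (x :: I ++ x :: T)) (l : List V) :
    motive l := by
  induction h : l.length using Nat.strong_induction_on generalizing l with
  | _ n ih =>
  match l with
  | [] => exact nil
  | x :: l =>
    by_cases hx : x ∈ l
    · obtain ⟨I, T, rfl, hI⟩ := exists_eq_append_cons_notMem hx
      exact loop x I T hI (ih _ (by simp at h ⊢; omega) _ rfl)
    · exact cons x l hx (ih _ (by simp at h ⊢; omega) _ rfl)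

variable [DecidableEq V]

def flipLoop : List V → List V
  | [] => []
  | x :: l =>
    if x ∈ l then
      if (l.take (l.idxOf x)).reverse = l.take (l.idxOf x) then
        x :: l.take (l.idxOf x) ++ flipLoop (x :: l.drop (l.idxOf x + 1))
      else x :: (l.take (l.idxOf x)).reverse ++ x :: l.drop (l.idxOf x + 1)
    else x :: flipLoop l
termination_by l => l.length
decreasing_by
  · have := List.length_pos_of_mem ‹x ∈ l›
    simp only [List.length_cons, List.length_drop]
    omega
  · simp

@[simp] lemma flipLoop_nil : flipLoop ([] : List V) = [] := by
  rw [flipLoop]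

lemma flipLoop_cons_of_notMem {x : V} {l : List V} (h : x ∉ l) :
    flipLoop (x :: l) = x :: flipLoop l := by
  rw [flipLoop, if_neg h]

lemma flipLoop_cons_append_cons {x : V} {I : List V} (T : List V) (h : x ∉ I) :
    flipLoop (x :: I ++ x :: T) =
      if I.reverse = I then x :: I ++ flipLoop (x :: T) else x :: I.reverse ++ x :: T := by
  have hidx : (I ++ x :: T).idxOf x = I.length := by simp [List.idxOf_append_of_notMem h]
  rw [List.cons_append, flipLoop, if_pos (by simp), hidx, List.take_left' rfl]
  simp [List.drop_append, List.drop_eq_nil_of_le]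

lemma exists_flipLoop_cons (x : V) (l : List V) : ∃ U, flipLoop (x :: l) = x :: U := by
  by_cases hx : x ∈ l
  · obtain ⟨I, T, rfl, hI⟩ := exists_eq_append_cons_notMem hx
    rw [← List.cons_append, flipLoop_cons_append_cons T hI]
    split_ifs <;> exact ⟨_, rfl⟩
  · exact ⟨_, flipLoop_cons_of_notMem hx⟩

lemma flipLoop_perm (l : List V) : (flipLoop l).Perm l := by
  induction l using loop_induction with
  | nil => simp
  | cons x l hx ih => rw [flipLoop_cons_of_notMem hx]; exact ih.cons x
  | loop x I T hI ih =>
    rw [flipLoop_cons_append_cons T hI]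
    split_ifs
    · exact ih.append_left _
    · exact ((List.reverse_perm I).cons x).append_right _

lemma length_flipLoop (l : List V) : (flipLoop l).length = l.length :=
  (flipLoop_perm l).length_eq

lemma flipLoop_flipLoop (l : List V) : flipLoop (flipLoop l) = l := by
  induction l using loop_induction with
  | nil => simp
  | cons x l hx ih =>
    have hx' : x ∉ flipLoop l := mt (flipLoop_perm l).mem_iff.mp hx
    rw [flipLoop_cons_of_notMem hx, flipLoop_cons_of_notMem hx', ih]
  | loop x I T hI ih =>
    by_cases hpal : I.reverse = I
    · obtain ⟨U, hU⟩ := exists_flipLoop_cons x T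
      rw [flipLoop_cons_append_cons T hI, if_pos hpal, hU, flipLoop_cons_append_cons U hI,
        if_pos hpal, ← hU, ih]
    · rw [flipLoop_cons_append_cons T hI, if_neg hpal,
        flipLoop_cons_append_cons T (by simpa using hI),
        if_neg (by rwa [List.reverse_reverse, eq_comm]), List.reverse_reverse]

lemma head?_flipLoop (l : List V) : (flipLoop l).head? = l.head? := by
  cases l with
  | nil => simp
  | cons x l =>
    obtain ⟨U, hU⟩ := exists_flipLoop_cons x l
    simp [hU]

lemma getLast?_flipLoop (l : List V) : (flipLoop l).getLast? = l.getLast? := by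
  induction l using loop_induction with
  | nil => simp
  | cons x l hx ih => simp [flipLoop_cons_of_notMem hx, List.getLast?_cons, ih]
  | loop x I T hI ih =>
    rw [flipLoop_cons_append_cons T hI]
    split_ifs
    · obtain ⟨U, hU⟩ := exists_flipLoop_cons x T
      rw [hU, List.getLast?_append_cons, ← hU, ih, List.getLast?_append_cons]
    · rw [List.getLast?_append_cons, List.getLast?_append_cons]

lemma isChain_flipLoop {R : V → V → Prop} (hR : ∀ a b, R a b → R b a) {l : List V}
    (hl : l.IsChain R) : (flipLoop l).IsChain R := by
  induction l using loop_induction with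
  | nil => simp
  | cons x l hx ih =>
    rw [flipLoop_cons_of_notMem hx, List.isChain_cons, head?_flipLoop]
    exact ⟨(List.isChain_cons.mp hl).1, ih hl.tail⟩
  | loop x I T hI ih =>
    obtain ⟨hloop, htail⟩ := List.isChain_split.mp hl
    rw [flipLoop_cons_append_cons T hI]
    split_ifs
    · obtain ⟨U, hU⟩ := exists_flipLoop_cons x T
      rw [hU, List.isChain_split, ← hU]
      exact ⟨hloop, ih htail⟩
    · have hrev : x :: I.reverse ++ [x] = (x :: I ++ [x]).reverse := by simp
      rw [List.isChain_split, hrev, List.isChain_reverse]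
      exact ⟨hloop.imp fun a b => hR a b, htail⟩

lemma edges_flipLoop_perm (l : List V) : (edges (flipLoop l)).Perm (edges l) := by
  induction l using loop_induction with
  | nil => simp
  | cons x l hx ih =>
    rw [flipLoop_cons_of_notMem hx, edges_cons, edges_cons, head?_flipLoop]
    exact ih.append_left _
  | loop x I T hI ih =>
    rw [flipLoop_cons_append_cons T hI]
    split_ifs
    · obtain ⟨U, hU⟩ := exists_flipLoop_cons x T
      rw [hU, edges_append_cons (x :: I) x U, edges_append_cons (x :: I) x T, ← hU]
      exact ih.append_left _
    · have hrev : x :: I.reverse ++ [x] = (x :: I ++ [x]).reverse := by simp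
      rw [edges_append_cons (x :: I.reverse) x T, edges_append_cons (x :: I) x T, hrev,
        edges_reverse]
      exact (List.reverse_perm _).append_right _

theorem exists_sublist_nodup_of_flipLoop_eq {R : V → V → Prop} (hR : ∀ a, ¬ R a a)
    {l : List V} (hl : l.IsChain R) (hfix : flipLoop l = l) :
    ∃ p : List V, p.Sublist l ∧ p.Nodup ∧ p.head? = l.head? ∧ p.getLast? = l.getLast? ∧
      p.IsChain R ∧
      ∃ m : Multiset (Sym2 V), (edges l : Multiset (Sym2 V)) = edges p + (m + m) := by
  induction l using loop_induction with
  | nil => exact ⟨[], by simp, by simp, rfl, rfl, by simp, 0, by simp⟩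
  | cons x l hx ih =>
    rw [flipLoop_cons_of_notMem hx, List.cons.injEq] at hfix
    obtain ⟨p, hsub, hnd, hhead, hlast, hchain, m, hm⟩ := ih hl.tail hfix.2
    refine ⟨x :: p, hsub.cons_cons x, List.nodup_cons.mpr ⟨fun h => hx (hsub.subset h), hnd⟩,
      rfl, by simp [List.getLast?_cons, hlast], ?_, m, ?_⟩
    · exact List.isChain_cons.mpr ⟨hhead ▸ (List.isChain_cons.mp hl).1, hchain⟩
    · rw [edges_cons, edges_cons, hhead, ← Multiset.coe_add, ← Multiset.coe_add, hm, add_assoc]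
  | loop x I T hI ih =>
    rw [flipLoop_cons_append_cons T hI] at hfix
    split_ifs at hfix with hpal
    · obtain ⟨hloop, htail⟩ := List.isChain_split.mp hl
      obtain ⟨p, hsub, hnd, hhead, hlast, hchain, m, hm⟩ :=
        ih htail (List.append_cancel_left hfix)
      obtain ⟨m', hm'⟩ := exists_edges_eq_add_self (List.Palindrome.of_reverse_eq hpal)
        (hloop.imp fun a _ h => by rintro rfl; exact hR a h)
      refine ⟨p, hsub.trans (List.sublist_append_right _ _), hnd, by simp [hhead], ?_, hchain,
        m' + m, ?_⟩
      · rw [hlast, List.getLast?_append_cons]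
      · rw [edges_append_cons, ← Multiset.coe_add, hm', hm]
        abel
    · exact absurd (List.cons.inj (List.append_inj_left hfix (by simp))).2 hpal

section Feasible

variable {A ι : Type*} [AddCommMonoid A] {G : SimpleGraph V} {s t : V} {g : Sym2 V → A} {c : A}
  {X : ι → Set V} {l : List V}

theorem IsFeasible.flipLoop (h : IsFeasible G s t g c X l) :
    IsFeasible G s t g c X (flipLoop l) where
  head?_eq := (head?_flipLoop l).trans h.head?_eq
  getLast?_eq := (getLast?_flipLoop l).trans h.getLast?_eq
  isChain := isChain_flipLoop (fun _ _ hab => hab.symm) h.isChain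
  sum_edges := by rw [Multiset.coe_eq_coe.mpr (edges_flipLoop_perm l), h.sum_edges]
  pairwise i := ((flipLoop_perm l).pairwise_iff fun hab => hab ∘ And.symm).mpr (h.pairwise i)

theorem IsFeasible.exists_nodup_of_flipLoop_eq (hA : ∀ a : A, a + a = 0)
    (h : IsFeasible G s t g c X l) (hfix : WalkList.flipLoop l = l) :
    ∃ p : List V, p.length ≤ l.length ∧ p.Nodup ∧ IsFeasible G s t g c X p := by
  obtain ⟨p, hsub, hnd, hhead, hlast, hchain, m, hm⟩ :=
    exists_sublist_nodup_of_flipLoop_eq (fun _ => G.irrefl) h.isChain hfix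
  refine ⟨p, hsub.length_le, hnd, hhead.trans h.head?_eq, hlast.trans h.getLast?_eq, hchain, ?_,
    fun i => (h.pairwise i).sublist hsub⟩
  rw [← h.sum_edges, hm, Multiset.map_add, Multiset.sum_add, Multiset.map_add, Multiset.sum_add,
    hA, add_zero]

end Feasible

variable {n : ℕ}

def flipTuple (w : Fin n → V) (i : Fin n) : V :=
  (flipLoop (List.ofFn w))[i.1]'(by simp [length_flipLoop])

lemma ofFn_flipTuple (w : Fin n → V) : List.ofFn (flipTuple w) = flipLoop (List.ofFn w) :=
  List.ext_getElem (by simp [length_flipLoop]) fun _ _ _ => by simp [flipTuple]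

lemma flipTuple_flipTuple (w : Fin n → V) : flipTuple (flipTuple w) = w :=
  List.ofFn_injective (by rw [ofFn_flipTuple, ofFn_flipTuple, flipLoop_flipLoop])

end WalkList

open WalkList

theorem stmt5_general {V : Type*} (G : SimpleGraph V) (s t : V)
    (d p : ℕ) (g : Sym2 V → (Fin d → ZMod 2)) (c : Fin d → ZMod 2)
    (X : Fin p → Set V) (ℓ : ℕ)
    (hno : ∀ ℓ' ≤ ℓ, ∀ w : Fin (ℓ' + 1) → V,
      Feasible G s t g c X w → ¬ Function.Injective w) :
    ∃ φ : {w : Fin (ℓ + 1) → V // Feasible G s t g c X w} →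
          {w : Fin (ℓ + 1) → V // Feasible G s t g c X w},
      ∀ W, φ (φ W) = W ∧ φ W ≠ W ∧ edgeMultiset (φ W).val = edgeMultiset W.val := by
  classical
  have hflip (w : Fin (ℓ + 1) → V) (hw : Feasible G s t g c X w) :
      Feasible G s t g c X (flipTuple w) := by
    rw [feasible_iff_isFeasible_ofFn, ofFn_flipTuple]
    exact ((feasible_iff_isFeasible_ofFn w).mp hw).flipLoop
  have hmoved (w : Fin (ℓ + 1) → V) (hw : Feasible G s t g c X w) : flipTuple w ≠ w := by
    intro hfix
    obtain ⟨q, hlen, hnd, hq⟩ :=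
      ((feasible_iff_isFeasible_ofFn w).mp hw).exists_nodup_of_flipLoop_eq
        (fun a => funext fun i => CharTwo.add_self_eq_zero (a i)) (by rw [← ofFn_flipTuple, hfix])
    obtain ⟨n, u, rfl⟩ := exists_ofFn_eq_of_ne_nil hq.ne_nil
    exact hno n (by simpa using hlen) u ((feasible_iff_isFeasible_ofFn u).mpr hq)
      (List.nodup_ofFn.mp hnd)
  refine ⟨fun W => ⟨flipTuple W.1, hflip W.1 W.2⟩, fun W => ⟨?_, ?_, ?_⟩⟩
  · exact Subtype.ext (flipTuple_flipTuple W.1)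
  · exact fun h => hmoved W.1 W.2 (congrArg Subtype.val h)
  · rw [edgeMultiset_eq_edges_ofFn, edgeMultiset_eq_edges_ofFn, ofFn_flipTuple]
    exact Multiset.coe_eq_coe.mpr (edges_flipLoop_perm _)

theorem stmt5 {V : Type*} [Fintype V] (G : SimpleGraph V) (s t : V) (hst : s ≠ t)
    (d p : ℕ) (g : Sym2 V → (Fin d → ZMod 2)) (c : Fin d → ZMod 2)
    (X : Fin p → Set V) (ℓ : ℕ)
    (hno : ∀ ℓ' ≤ ℓ, ∀ w : Fin (ℓ' + 1) → V,
      Feasible G s t g c X w → ¬ Function.Injective w) :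
    ∃ φ : {w : Fin (ℓ + 1) → V // Feasible G s t g c X w} →
          {w : Fin (ℓ + 1) → V // Feasible G s t g c X w},
      ∀ W, φ (φ W) = W ∧ φ W ≠ W ∧ edgeMultiset (φ W).val = edgeMultiset W.val :=
  stmt5_general G s t d p g c X ℓ hno
end

section
/- Let G be a finite simple graph (in particular, with no self-loops) and let W = (v_0, v_1, …, v_ℓ) with ℓ ≥ 1 be a walk in G whose vertex sequence is a palindrome, i.e. v_k = v_{ℓ−k} for all 0 ≤ k ≤ ℓ. Then ℓ is even; for every unordered pair e of vertices, the number of indices k ∈ [ℓ] with {v_{k−1}, v_k} = e is even; and consequently, for every natural number d and every function g from unordered vertex pairs to (ZMod 2)^d, Σ_{k=1}^{ℓ} g({v_{k−1}, v_k}) = 0. -/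
/-!
Reversal `i ↦ ℓ - 1 - i` of the edge indices maps the edge at `i` to the same unordered pair,
by the palindrome property. If `ℓ` were odd, the middle edge would be its own reverse, i.e. a
loop; so `ℓ` is even, reversal has no fixed index, and it pairs up the indices of every edge
class and the terms of every sum in characteristic two.
-/

theorem Fin.rev_ne_self {n : ℕ} (hn : Even n) (i : Fin n) : i.rev ≠ i := by
  intro h
  have h' := congrArg Fin.val h
  rw [Fin.val_rev] at h'
  obtain ⟨m, rfl⟩ := hn
  omega

theorem Fin.sum_eq_zero_of_rev_invariant {M : Type*} [AddCommMonoid M] (hM : ∀ x : M, x + x = 0)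
    {n : ℕ} (hn : Even n) {f : Fin n → M} (hf : ∀ i, f i.rev = f i) : ∑ i, f i = 0 :=
  Finset.sum_ninvolution Fin.rev (fun i => by rw [hf, hM]) (fun i _ => i.rev_ne_self hn)
    (fun _ => Finset.mem_univ _) Fin.rev_rev

theorem Fin.even_ncard_of_rev_invariant {n : ℕ} (hn : Even n) {p : Fin n → Prop}
    (hp : ∀ i, p i.rev ↔ p i) : Even {i | p i}.ncard := by
  classical
  rw [← ZMod.natCast_eq_zero_iff_even, Set.ncard_eq_toFinset_card', Set.toFinset_ofPred,
    Finset.card_filter]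
  push_cast
  exact Fin.sum_eq_zero_of_rev_invariant CharTwo.add_self_eq_zero hn fun i => by simp only [hp]

section Palindrome

variable {α : Type*} {n : ℕ} {w : Fin (n + 1) → α}

theorem sym2_rev_eq_of_palindrome (hpal : ∀ k, w k = w k.rev) (i : Fin n) :
    s(w i.rev.castSucc, w i.rev.succ) = s(w i.castSucc, w i.succ) := by
  rw [hpal i.rev.castSucc, Fin.rev_castSucc, Fin.rev_rev, hpal i.rev.succ, Fin.rev_succ,
    Fin.rev_rev, Sym2.eq_swap]

theorem even_of_palindrome (hpal : ∀ k, w k = w k.rev)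
    (hne : ∀ i : Fin n, w i.castSucc ≠ w i.succ) : Even n := by
  by_contra hodd
  obtain ⟨m, rfl⟩ := Nat.not_even_iff_odd.mp hodd
  let i : Fin (2 * m + 1) := ⟨m, by omega⟩
  have hmid : i.castSucc.rev = i.succ := Fin.ext (by simp [Fin.val_rev, i]; omega)
  exact hne i (by rw [hpal i.castSucc, hmid])

end Palindrome

theorem stmt7_general {V : Type*} (G : SimpleGraph V) (ℓ : ℕ)
    (w : Fin (ℓ + 1) → V)
    (hadj : ∀ i : Fin ℓ, G.Adj (w i.castSucc) (w i.succ))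
    (hpal : ∀ k : Fin (ℓ + 1), w k = w k.rev) :
    Even ℓ ∧
    (∀ e : Sym2 V, Even {i : Fin ℓ | s(w i.castSucc, w i.succ) = e}.ncard) ∧
    (∀ (d : ℕ) (g : Sym2 V → (Fin d → ZMod 2)),
      (∑ i : Fin ℓ, g s(w i.castSucc, w i.succ)) = 0) := by
  have heven : Even ℓ := even_of_palindrome hpal fun i => (hadj i).ne
  refine ⟨heven, fun e => ?_, fun d g => ?_⟩
  · exact Fin.even_ncard_of_rev_invariant heven fun i => by
      rw [sym2_rev_eq_of_palindrome hpal]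
  · exact Fin.sum_eq_zero_of_rev_invariant
      (fun x => funext fun j => CharTwo.add_self_eq_zero (x j)) heven fun i => by
        rw [sym2_rev_eq_of_palindrome hpal]

theorem stmt7 {V : Type*} [Fintype V] (G : SimpleGraph V) (ℓ : ℕ) (hℓ : 1 ≤ ℓ)
    (w : Fin (ℓ + 1) → V)
    (hadj : ∀ i : Fin ℓ, G.Adj (w i.castSucc) (w i.succ))
    (hpal : ∀ k : Fin (ℓ + 1), w k = w k.rev) :
    Even ℓ ∧
    (∀ e : Sym2 V, Even {i : Fin ℓ | s(w i.castSucc, w i.succ) = e}.ncard) ∧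
    (∀ (d : ℕ) (g : Sym2 V → (Fin d → ZMod 2)),
      (∑ i : Fin ℓ, g s(w i.castSucc, w i.succ)) = 0) :=
  stmt7_general G ℓ w hadj hpal
end

section
/- Let W = (v_0, v_1, …, v_ℓ) be a feasible s-t-walk and let 0 ≤ i < j ≤ ℓ be indices such that the subsequence (v_i, v_{i+1}, …, v_j) is a palindrome, i.e. v_{i+k} = v_{j−k} for all 0 ≤ k ≤ j−i (in particular v_i = v_j). Then the sequence W' = (v_0, …, v_i, v_{j+1}, …, v_ℓ) obtained by deleting the vertices at positions i+1, …, j is a feasible s-t-walk of length ℓ − (j − i). -/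
open Finset

theorem sum_range_eq_zero_of_reflect {M : Type*} [AddCommGroup M] [Module (ZMod 2) M]
    {f : ℕ → M} {n : ℕ} (hn : Even n) (hf : ∀ r < n, f (n - 1 - r) = f r) :
    ∑ r ∈ range n, f r = 0 := by
  obtain ⟨k, rfl⟩ := hn
  have hupper : ∑ x ∈ range k, f (k + x) = ∑ x ∈ range k, f x := by
    rw [← sum_range_reflect]
    refine sum_congr rfl fun x hx => ?_
    have hx : x < k := mem_range.mp hx
    rw [show k + (k - 1 - x) = k + k - 1 - x by omega, hf x (by omega)]
  rw [sum_range_add, hupper, ZModModule.add_self]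

theorem sum_range_skip_segment {M : Type*} [AddCommMonoid M] {F F' : ℕ → M} {i m ℓ : ℕ}
    (hℓ : i + m ≤ ℓ) (hlow : ∀ k < i, F' k = F k) (hhigh : ∀ k, i ≤ k → F' k = F (k + m))
    (hseg : ∑ x ∈ range m, F (i + x) = 0) :
    ∑ k ∈ range (ℓ - m), F' k = ∑ a ∈ range ℓ, F a := by
  obtain ⟨r, rfl⟩ : ∃ r, ℓ = i + m + r := ⟨ℓ - (i + m), by omega⟩
  rw [show i + m + r - m = i + r by omega, show i + m + r = i + (m + r) by omega, sum_range_add,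
    sum_range_add, sum_range_add, hseg, zero_add]
  congr 1
  · exact sum_congr rfl fun k hk => hlow k (mem_range.mp hk)
  · exact sum_congr rfl fun x _ => by rw [hhigh _ (by omega), add_right_comm, add_assoc]

def cutIndex (i m a : ℕ) : ℕ := if a ≤ i then a else a + m

theorem cutIndex_injective (i m : ℕ) : Function.Injective (cutIndex i m) := by
  intro a b h
  unfold cutIndex at h
  split_ifs at h <;> omega

theorem cutIndex_le {i m a ℓ : ℕ} (hm : m ≤ ℓ) (ha : a ≤ ℓ - m) : cutIndex i m a ≤ ℓ := by
  unfold cutIndex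
  split_ifs <;> omega

theorem cutIndex_of_le {i m a : ℕ} (ha : a ≤ i) : cutIndex i m a = a :=
  if_pos ha

section

variable {V : Type*}

theorem even_sub_of_palindrome {G : SimpleGraph V} {u : ℕ → V} {i j : ℕ} (hij : i ≤ j)
    (hadj : ∀ a < j, G.Adj (u a) (u (a + 1))) (hpal : ∀ k ≤ j - i, u (i + k) = u (j - k)) :
    Even (j - i) := by
  by_contra hodd
  obtain ⟨r, hr⟩ := Nat.not_even_iff_odd.mp hodd
  have hmid : u (i + (r + 1)) = u (i + r) := by
    rw [hpal (r + 1) (by omega), show j - (r + 1) = i + r by omega]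
  exact G.irrefl (hmid ▸ hadj (i + r) (by omega))

theorem sum_edges_palindrome_eq_zero {M : Type*} [AddCommGroup M] [Module (ZMod 2) M]
    {G : SimpleGraph V} (g : Sym2 V → M) {u : ℕ → V} {i j : ℕ} (hij : i ≤ j)
    (hadj : ∀ a < j, G.Adj (u a) (u (a + 1))) (hpal : ∀ k ≤ j - i, u (i + k) = u (j - k)) :
    ∑ x ∈ range (j - i), g s(u (i + x), u (i + x + 1)) = 0 := by
  refine sum_range_eq_zero_of_reflect (even_sub_of_palindrome hij hadj hpal) fun r hr => ?_
  have hleft : u (i + (j - i - 1 - r)) = u (i + r + 1) := by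
    rw [show i + (j - i - 1 - r) = j - (r + 1) by omega, ← hpal (r + 1) (by omega), add_assoc]
  have hright : u (i + (j - i - 1 - r) + 1) = u (i + r) := by
    rw [show i + (j - i - 1 - r) + 1 = j - r by omega, ← hpal r (by omega)]
  rw [hleft, hright, Sym2.eq_swap]

theorem comp_cutIndex_of_ge {u : ℕ → V} {i m a : ℕ} (hi : u i = u (i + m)) (ha : i ≤ a) :
    u (cutIndex i m a) = u (a + m) := by
  unfold cutIndex
  split_ifs with h
  · rw [show a = i by omega, hi]
  · rfl

theorem feasible_iff_of_agree {G : SimpleGraph V} {s t : V} {d p : ℕ}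
    {g : Sym2 V → (Fin d → ZMod 2)} {c : Fin d → ZMod 2} {X : Fin p → Set V}
    {ℓ : ℕ} {w : Fin (ℓ + 1) → V} {u : ℕ → V}
    (hu : ∀ k : Fin (ℓ + 1), w k = u k) :
    Feasible G s t g c X w ↔ u 0 = s ∧ u ℓ = t ∧ (∀ a < ℓ, G.Adj (u a) (u (a + 1))) ∧
      ∑ a ∈ range ℓ, g s(u a, u (a + 1)) = c ∧
      ∀ q, ∀ a ≤ ℓ, ∀ b ≤ ℓ, u a ∈ X q → u b ∈ X q → a = b := by
  simp only [Feasible, IsWalk, hu, Fin.val_zero, Fin.val_last, Fin.val_castSucc, Fin.val_succ,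
    Fin.sum_univ_eq_sum_range (fun a => g s(u a, u (a + 1))), Fin.forall_iff, Fin.ext_iff,
    Nat.lt_succ_iff, and_assoc]

end

theorem stmt10 {V : Type*} (G : SimpleGraph V) (s t : V)
    (d p : ℕ) (g : Sym2 V → (Fin d → ZMod 2)) (c : Fin d → ZMod 2)
    (X : Fin p → Set V) (ℓ : ℕ)
    (w : Fin (ℓ + 1) → V) (hw : Feasible G s t g c X w)
    (i j : ℕ) (hij : i < j) (hjℓ : j ≤ ℓ)
    (hpal : ∀ (k : ℕ) (hk : k ≤ j - i), w ⟨i + k, by omega⟩ = w ⟨j - k, by omega⟩) :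
    Feasible G s t g c X
      (fun k : Fin (ℓ - (j - i) + 1) =>
        if (k : ℕ) ≤ i then w ⟨(k : ℕ), by omega⟩
        else w ⟨(k : ℕ) + (j - i), by omega⟩) := by
  set u : ℕ → V := fun a => w (Fin.ofNat (ℓ + 1) a)
  have hw_mk (a : ℕ) (ha : a < ℓ + 1) : w ⟨a, ha⟩ = u a :=
    congrArg w (Fin.ext (Nat.mod_eq_of_lt ha).symm)
  obtain ⟨hs, ht, hadj, hsum, hX⟩ := (feasible_iff_of_agree fun k => hw_mk k k.isLt).1 hw
  have hpal' (k : ℕ) (hk : k ≤ j - i) : u (i + k) = u (j - k) := by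
    rw [← hw_mk _ (by omega), ← hw_mk _ (by omega), hpal k hk]
  have hends : u i = u (i + (j - i)) := by
    simpa [Nat.add_sub_cancel' hij.le] using hpal' 0 (Nat.zero_le _)
  rw [feasible_iff_of_agree (u := fun a => u (cutIndex i (j - i) a)) fun k => by
    simp only [cutIndex]; split_ifs <;> exact hw_mk _ _]
  refine ⟨by rw [cutIndex_of_le (Nat.zero_le i), hs], ?_, ?_, ?_, ?_⟩
  · rw [comp_cutIndex_of_ge hends (by omega), Nat.sub_add_cancel (by omega), ht]
  · intro a ha
    rcases lt_or_ge a i with h | h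
    · rw [cutIndex_of_le h.le, cutIndex_of_le h]
      exact hadj a (by omega)
    · rw [comp_cutIndex_of_ge hends h, comp_cutIndex_of_ge hends (by omega), add_right_comm]
      exact hadj _ (by omega)
  · rw [← hsum]
    refine sum_range_skip_segment (F := fun a => g s(u a, u (a + 1))) (by omega) (fun k hk => ?_)
      (fun k hk => ?_) (sum_edges_palindrome_eq_zero g hij.le (fun a ha => hadj a (by omega)) hpal')
    · rw [cutIndex_of_le hk.le, cutIndex_of_le hk]
    · rw [comp_cutIndex_of_ge hends hk, comp_cutIndex_of_ge hends (by omega), add_right_comm]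
  · intro q a ha b hb hA hB
    exact cutIndex_injective i (j - i)
      (hX q _ (cutIndex_le (by omega) ha) _ (cutIndex_le (by omega) hb) hA hB)
end

section
/- Let G be a connected finite simple graph and let X, Y ⊆ V(G) satisfy X ∪ Y = V(G), X ∩ Y = {v}, and no edge of G joins a vertex of X ∖ {v} to a vertex of Y ∖ {v}. Let S, T be disjoint nonempty vertex sets with S ∪ T ⊆ Y, and let k be a natural number. Then (G,S,T,k) is a yes-instance of Two-Sets Cut-Uncut if and only if (G[Y],S,T,k) is a yes-instance of Two-Sets Cut-Uncut. -/
/-!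
Collapsing `X` onto the cut vertex `v` is a retraction `r : V → Y` of `G` onto `G[Y]` that maps
every edge either to an edge or to a single vertex. A walk between two vertices of `Y` that leaves
`Y` has to pass through `v`, so `r` maps it to a walk of `G[Y]` inside the same side of a partition.
Hence a solution `(A, B)` for `G` restricts to the solution `(A ∩ Y, B ∩ Y)` for `G[Y]`, and
a solution `(A', B')` for `G[Y]` pulls back along `r` to the solution `(r⁻¹ A', r⁻¹ B')` for
`G`; in both directions every cut edge of the new solution is (the image of) a cut edge of the
old one.
-/

section Cut

variable {V : Type*} {G : SimpleGraph V}

lemma ncard_cutSet_induce_preimage_le [Finite V] (Y A : Set V) :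
    (cutSet (G.induce Y) (Subtype.val ⁻¹' A)).ncard ≤ (cutSet G A).ncard := by
  refine Set.ncard_le_ncard_of_injOn (Sym2.map Subtype.val) ?_
    (Sym2.map.injective Subtype.val_injective).injOn
  rintro _ ⟨he, x, y, rfl, hx, hy⟩
  exact ⟨he, x, y, rfl, hx, hy⟩

end Cut

section Walk

variable {V W : Type*} {G : SimpleGraph V} {H : SimpleGraph W}

lemma reachableIn_of_walk {f : V → W}
    (hf : ∀ a b, G.Adj a b → f a = f b ∨ H.Adj (f a) (f b))
    {A : Set W} {x y : V} (w : G.Walk x y) (hw : ∀ u ∈ w.support, f u ∈ A) :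
    ReachableIn H A (f x) (f y) := by
  induction w with
  | nil => exact ⟨.nil, by simpa using hw⟩
  | @cons a c b hac p ih =>
    obtain ⟨p', hp'⟩ := ih fun u hu => hw u (List.mem_cons_of_mem _ hu)
    rcases hf a c hac with heq | hadj
    · exact heq ▸ ⟨p', hp'⟩
    · refine ⟨.cons hadj p', ?_⟩
      simpa [hw a List.mem_cons_self] using hp'

end Walk

section Retract

variable {V : Type*} {G : SimpleGraph V} {X Y : Set V} {v : V}

open Classical in
noncomputable def retract (hv : v ∈ Y) (u : V) : Y :=
  if h : u ∈ Y then ⟨u, h⟩ else ⟨v, hv⟩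

lemma retract_of_mem (hv : v ∈ Y) {u : V} (hu : u ∈ Y) : retract hv u = ⟨u, hu⟩ :=
  dif_pos hu

lemma retract_of_notMem (hv : v ∈ Y) {u : V} (hu : u ∉ Y) : retract hv u = ⟨v, hv⟩ :=
  dif_neg hu

@[simp]
lemma retract_val (hv : v ∈ Y) (u : Y) : retract hv u = u :=
  retract_of_mem hv u.2

lemma subset_retract_preimage (hv : v ∈ Y) {P : Set V} (hP : P ⊆ Y) {Q : Set Y}
    (hPQ : Subtype.val ⁻¹' P ⊆ Q) : P ⊆ retract hv ⁻¹' Q := fun u hu => by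
  simpa [retract_of_mem hv (hP hu)] using hPQ (show (⟨u, hP hu⟩ : Y).1 ∈ P from hu)

lemma ReachableIn.retract_preimage (hv : v ∈ Y) {A : Set Y} {x y : Y}
    (h : ReachableIn (G.induce Y) A x y) : ReachableIn G (retract hv ⁻¹' A) x y := by
  obtain ⟨w, hw⟩ := h
  exact reachableIn_of_walk (f := Subtype.val) (fun _ _ hab => .inr hab) w
    fun u hu => by simpa using hw u hu

variable (hXY : X ∪ Y = Set.univ) (hsep : ∀ x ∈ X \ {v}, ∀ y ∈ Y \ {v}, ¬ G.Adj x y)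
include hXY hsep

lemma retract_eq_of_adj_of_notMem (hv : v ∈ Y) {a b : V} (hab : G.Adj a b) (ha : a ∉ Y) :
    retract hv b = retract hv a := by
  rw [retract_of_notMem hv ha]
  by_cases hb : b ∈ Y
  · have haX : a ∈ X := (Set.mem_union _ _ _).1 (hXY ▸ Set.mem_univ a) |>.resolve_right ha
    have hbv : b = v := by
      by_contra hbv
      exact hsep a ⟨haX, fun hav => ha (hav ▸ hv)⟩ b ⟨hb, hbv⟩ hab
    subst hbv
    exact retract_of_mem hv hb
  · exact retract_of_notMem hv hb

lemma mem_of_adj_of_retract_ne (hv : v ∈ Y) {a b : V} (hab : G.Adj a b)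
    (hne : retract hv a ≠ retract hv b) : a ∈ Y ∧ b ∈ Y :=
  ⟨by_contra fun ha => hne (retract_eq_of_adj_of_notMem hXY hsep hv hab ha).symm,
    by_contra fun hb => hne (retract_eq_of_adj_of_notMem hXY hsep hv hab.symm hb)⟩

lemma retract_eq_or_adj (hv : v ∈ Y) (a b : V) (hab : G.Adj a b) :
    retract hv a = retract hv b ∨ (G.induce Y).Adj (retract hv a) (retract hv b) := by
  by_cases hne : retract hv a = retract hv b
  · exact .inl hne
  · obtain ⟨ha, hb⟩ := mem_of_adj_of_retract_ne hXY hsep hv hab hne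
    rw [retract_of_mem hv ha, retract_of_mem hv hb]
    exact .inr hab

lemma mem_support_of_walk_of_notMem (hv : v ∈ Y) {a b : V} (w : G.Walk a b) (ha : a ∈ Y)
    (hb : b ∉ Y) : v ∈ w.support := by
  obtain ⟨d, hd, hfst, hsnd⟩ := w.exists_boundary_dart Y ha hb
  have hfst_eq : d.fst = v := by
    simpa [retract_of_mem hv hfst, retract_of_notMem hv hsnd] using
      retract_eq_of_adj_of_notMem hXY hsep hv d.adj.symm hsnd
  exact hfst_eq ▸ w.dart_fst_mem_support_of_mem_darts hd

lemma ReachableIn.induce_preimage (hv : v ∈ Y) {A : Set V} {x y : Y}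
    (h : ReachableIn G A x y) : ReachableIn (G.induce Y) (Subtype.val ⁻¹' A) x y := by
  classical
  obtain ⟨w, hw⟩ := h
  simpa using reachableIn_of_walk (retract_eq_or_adj hXY hsep hv) w fun u hu => by
    by_cases huY : u ∈ Y
    · simpa [retract_of_mem hv huY] using hw u hu
    · have hvw : v ∈ (w.takeUntil u hu).support :=
        mem_support_of_walk_of_notMem hXY hsep hv _ x.2 huY
      simpa [retract_of_notMem hv huY] using hw v (w.support_takeUntil_subset_support hu hvw)

lemma ncard_cutSet_retract_preimage_le [Finite V] (hv : v ∈ Y) (A : Set Y) :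
    (cutSet G (retract hv ⁻¹' A)).ncard ≤ (cutSet (G.induce Y) A).ncard := by
  have hsub : cutSet G (retract hv ⁻¹' A) ⊆ Sym2.map Subtype.val '' cutSet (G.induce Y) A := by
    rintro _ ⟨hxy, x, y, rfl, hx, hy⟩
    obtain ⟨hxY, hyY⟩ := mem_of_adj_of_retract_ne hXY hsep hv hxy
      fun h => hy (show retract hv y ∈ A from h ▸ hx)
    rw [Set.mem_preimage, retract_of_mem hv hxY] at hx
    rw [Set.mem_preimage, retract_of_mem hv hyY] at hy
    exact ⟨s(⟨x, hxY⟩, ⟨y, hyY⟩), ⟨hxy, _, _, rfl, hx, hy⟩, rfl⟩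
  calc (cutSet G (retract hv ⁻¹' A)).ncard
      ≤ (Sym2.map Subtype.val '' cutSet (G.induce Y) A).ncard := Set.ncard_le_ncard hsub
    _ = (cutSet (G.induce Y) A).ncard :=
      Set.ncard_image_of_injective _ (Sym2.map.injective Subtype.val_injective)

end Retract

theorem stmt12_general {V : Type*} [Fintype V] (G : SimpleGraph V)
    (X Y : Set V) (v : V) (hXY : X ∪ Y = Set.univ) (hXYv : X ∩ Y = {v})
    (hsep : ∀ x ∈ X \ {v}, ∀ y ∈ Y \ {v}, ¬ G.Adj x y)
    (S T : Set V)
    (hSTY : S ∪ T ⊆ Y) (k : ℕ) :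
    TwoSetsCutUncut G S T k ↔
      TwoSetsCutUncut (G.induce Y) (Subtype.val ⁻¹' S) (Subtype.val ⁻¹' T) k := by
  have hv : v ∈ Y := (hXYv.symm ▸ rfl : v ∈ X ∩ Y).2
  constructor
  · rintro ⟨A, B, hunion, hinter, hSA, hTB, hS, hT, hcut⟩
    refine ⟨_, _, by rw [← Set.preimage_union, hunion, Set.preimage_univ],
      by rw [← Set.preimage_inter, hinter, Set.preimage_empty], Set.preimage_mono hSA,
      Set.preimage_mono hTB, fun x hx y hy => (hS _ hx _ hy).induce_preimage hXY hsep hv,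
      fun x hx y hy => (hT _ hx _ hy).induce_preimage hXY hsep hv,
      (ncard_cutSet_induce_preimage_le Y A).trans hcut⟩
  · rintro ⟨A, B, hunion, hinter, hSA, hTB, hS, hT, hcut⟩
    have hSY : S ⊆ Y := Set.subset_union_left.trans hSTY
    have hTY : T ⊆ Y := Set.subset_union_right.trans hSTY
    refine ⟨_, _, by rw [← Set.preimage_union, hunion, Set.preimage_univ],
      by rw [← Set.preimage_inter, hinter, Set.preimage_empty],
      subset_retract_preimage hv hSY hSA, subset_retract_preimage hv hTY hTB,
      fun x hx y hy => ?_, fun x hx y hy => ?_,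
      (ncard_cutSet_retract_preimage_le hXY hsep hv A).trans hcut⟩
    · exact (hS ⟨x, hSY hx⟩ hx ⟨y, hSY hy⟩ hy).retract_preimage hv
    · exact (hT ⟨x, hTY hx⟩ hx ⟨y, hTY hy⟩ hy).retract_preimage hv

theorem stmt12 {V : Type*} [Fintype V] (G : SimpleGraph V) (hG : G.Connected)
    (X Y : Set V) (v : V) (hXY : X ∪ Y = Set.univ) (hXYv : X ∩ Y = {v})
    (hsep : ∀ x ∈ X \ {v}, ∀ y ∈ Y \ {v}, ¬ G.Adj x y)
    (S T : Set V) (hS : S.Nonempty) (hT : T.Nonempty) (hST : Disjoint S T)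
    (hSTY : S ∪ T ⊆ Y) (k : ℕ) :
    TwoSetsCutUncut G S T k ↔
      TwoSetsCutUncut (G.induce Y) (Subtype.val ⁻¹' S) (Subtype.val ⁻¹' T) k :=
  stmt12_general G X Y v hXY hXYv hsep S T hSTY k
end

section
/- Let G be a connected finite simple graph and let X, Y ⊆ V(G) satisfy X ∪ Y = V(G), X ∩ Y = {v}, and no edge of G joins a vertex of X ∖ {v} to a vertex of Y ∖ {v}. Let S, T be disjoint nonempty vertex sets with X ∩ S ≠ ∅, X ∩ T ≠ ∅, Y ∩ S ≠ ∅, and Y ∩ T ≠ ∅. Then for every natural number k, (G,S,T,k) is not a yes-instance of Two-Sets Cut-Uncut. -/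
/-!
The vertex `v` separates `X ∖ {v}` from `Y ∖ {v}`, so every walk from `X` to `Y ∖ X` passes
through `v`. Since `S` meets both sides and is connected inside `G[A]`, this forces `v ∈ A`;
the same argument for `T` gives `v ∈ B`, contradicting `A ∩ B = ∅`.
-/

namespace SimpleGraph

variable {V : Type*} {G : SimpleGraph V}

theorem Walk.mem_support_of_forall_adj_leaving_eq {X : Set V} {v : V}
    (hX : ∀ a ∈ X, ∀ b ∉ X, G.Adj a b → a = v) {x y : V} (w : G.Walk x y)
    (hx : x ∈ X) (hy : y ∉ X) : v ∈ w.support := by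
  obtain ⟨d, hd, hfst, hsnd⟩ := w.exists_boundary_dart X hx hy
  rw [← hX d.fst hfst d.snd hsnd d.adj]
  exact w.dart_fst_mem_support_of_mem_darts hd

theorem adj_leaving_eq_of_separation {X Y : Set V} {v : V}
    (hXY : X ∪ Y = Set.univ) (hvX : v ∈ X)
    (hsep : ∀ x ∈ X \ {v}, ∀ y ∈ Y \ {v}, ¬ G.Adj x y) :
    ∀ a ∈ X, ∀ b ∉ X, G.Adj a b → a = v := by
  intro a ha b hb hab
  have hbY : b ∈ Y := (Set.mem_union b X Y).1 (hXY ▸ Set.mem_univ b) |>.resolve_left hb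
  by_contra hav
  exact hsep a ⟨ha, hav⟩ b ⟨hbY, fun hbv => hb (hbv ▸ hvX)⟩ hab

theorem mem_of_reachableIn_of_separation {X Y : Set V} {v : V}
    (hXY : X ∪ Y = Set.univ) (hXYv : X ∩ Y = {v})
    (hsep : ∀ x ∈ X \ {v}, ∀ y ∈ Y \ {v}, ¬ G.Adj x y)
    {A : Set V} {x y : V} (hx : x ∈ X) (hy : y ∈ Y) (hxy : ReachableIn G A x y) : v ∈ A := by
  obtain ⟨w, hwA⟩ := hxy
  have hvX : v ∈ X := (hXYv.symm.subset (Set.mem_singleton v)).1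
  by_cases hyX : y ∈ X
  · have hyv : y = v := hXYv.subset ⟨hyX, hy⟩
    exact hyv ▸ hwA y w.end_mem_support
  · exact hwA v <| w.mem_support_of_forall_adj_leaving_eq
      (adj_leaving_eq_of_separation hXY hvX hsep) hx hyX

end SimpleGraph

open SimpleGraph in
theorem stmt13_general {V : Type*} (G : SimpleGraph V)
    (X Y : Set V) (v : V) (hXY : X ∪ Y = Set.univ) (hXYv : X ∩ Y = {v})
    (hsep : ∀ x ∈ X \ {v}, ∀ y ∈ Y \ {v}, ¬ G.Adj x y)
    (S T : Set V)
    (hXS : (X ∩ S).Nonempty) (hXT : (X ∩ T).Nonempty)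
    (hYS : (Y ∩ S).Nonempty) (hYT : (Y ∩ T).Nonempty) (k : ℕ) :
    ¬ TwoSetsCutUncut G S T k := by
  rintro ⟨A, B, -, hABd, -, -, hSconn, hTconn, -⟩
  obtain ⟨s₁, hs₁X, hs₁S⟩ := hXS
  obtain ⟨s₂, hs₂Y, hs₂S⟩ := hYS
  obtain ⟨t₁, ht₁X, ht₁T⟩ := hXT
  obtain ⟨t₂, ht₂Y, ht₂T⟩ := hYT
  have hvA : v ∈ A := mem_of_reachableIn_of_separation hXY hXYv hsep hs₁X hs₂Y
    (hSconn s₁ hs₁S s₂ hs₂S)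
  have hvB : v ∈ B := mem_of_reachableIn_of_separation hXY hXYv hsep ht₁X ht₂Y
    (hTconn t₁ ht₁T t₂ ht₂T)
  exact (Set.eq_empty_iff_forall_notMem.1 hABd v) ⟨hvA, hvB⟩

theorem stmt13 {V : Type*} [Fintype V] (G : SimpleGraph V) (hG : G.Connected)
    (X Y : Set V) (v : V) (hXY : X ∪ Y = Set.univ) (hXYv : X ∩ Y = {v})
    (hsep : ∀ x ∈ X \ {v}, ∀ y ∈ Y \ {v}, ¬ G.Adj x y)
    (S T : Set V) (hS : S.Nonempty) (hT : T.Nonempty) (hST : Disjoint S T)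
    (hXS : (X ∩ S).Nonempty) (hXT : (X ∩ T).Nonempty)
    (hYS : (Y ∩ S).Nonempty) (hYT : (Y ∩ T).Nonempty) (k : ℕ) :
    ¬ TwoSetsCutUncut G S T k :=
  stmt13_general G X Y v hXY hXYv hsep S T hXS hXT hYS hYT k
end

section
/- Let G be a connected finite simple graph and let X, Y ⊆ V(G) satisfy X ∪ Y = V(G), X ∩ Y = {v}, and no edge of G joins a vertex of X ∖ {v} to a vertex of Y ∖ {v}. Let S, T be disjoint nonempty vertex sets with (X ∖ Y) ∩ S ≠ ∅, X ∩ T = ∅, Y ∩ S = ∅, and (Y ∖ X) ∩ T ≠ ∅. Then for every natural number k, (G,S,T,k) is a yes-instance of Two-Sets Cut-Uncut if and only if (G[Y], {v}, T, k) is a yes-instance or (G[X], S, {v}, k) is a yes-instance of Two-Sets Cut-Uncut. -/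
section Aux

variable {V : Type*} {G : SimpleGraph V}

lemma reachableIn_mono {A A' : Set V} {x y : V} (h : ReachableIn G A x y) (hs : A ⊆ A') :
    ReachableIn G A' x y := by
  obtain ⟨w, hw⟩ := h
  exact ⟨w, fun u hu => hs (hw u hu)⟩

/-- Any walk from outside `A` to inside `A` must pass through `v`,
if `v` is the only vertex of `A` with neighbours outside `A`. -/
lemma pass_through {A : Set V} {v : V}
    (hsep : ∀ x ∈ A, x ≠ v → ∀ y ∉ A, ¬ G.Adj x y) :
    ∀ {a b : V} (w : G.Walk a b), a ∉ A → b ∈ A → v ∈ w.support := by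
  intro a b w
  induction w with
  | nil => intro ha hb; exact absurd hb ha
  | @cons a c b h p ih =>
    intro ha hb
    by_cases hc : c ∈ A
    · by_cases hcv : c = v
      · subst hcv; simp [SimpleGraph.Walk.support_cons]
      · exact absurd h.symm (hsep c hc hcv a ha)
    · have := ih hc hb
      simp [SimpleGraph.Walk.support_cons]
      right
      exact this

/-- If `v` is the only boundary vertex of `A`, any two vertices of `A` joined by a walk
are joined by a walk inside `A`. -/
lemma conn_inside [DecidableEq V] {A : Set V} {v : V} (hv : v ∈ A)
    (hsep : ∀ x ∈ A, x ≠ v → ∀ y ∉ A, ¬ G.Adj x y) :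
    ∀ (n : ℕ) {a b : V} (w : G.Walk a b), w.length ≤ n → a ∈ A → b ∈ A →
      ReachableIn G A a b := by
  intro n
  induction n with
  | zero =>
    intro a b w hw ha hb
    cases w with
    | nil => exact ⟨.nil, by simp [ha]⟩
    | cons h p => simp at hw
  | succ m ih =>
    intro a b w hw ha hb
    cases w with
    | nil => exact ⟨.nil, by simp [ha]⟩
    | @cons _ c _ h p =>
      by_cases hc : c ∈ A
      · have hlen : p.length ≤ m := by
          have h2 : p.length + 1 ≤ m + 1 := by simpa [SimpleGraph.Walk.length_cons] using hw
          omega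
        obtain ⟨w', hw'⟩ := ih p hlen hc hb
        exact ⟨.cons h w', by
          intro u hu
          rcases List.mem_cons.mp (by simpa [SimpleGraph.Walk.support_cons] using hu) with h1 | h1
          · subst h1; exact ha
          · exact hw' u h1⟩
      · have hav : a = v := by
          by_contra hav
          exact hsep a ha hav c hc h
        have hvp : v ∈ p.support := pass_through hsep p hc hb
        have hlen : (p.dropUntil v hvp).length ≤ m := by
          have h1 := SimpleGraph.Walk.length_dropUntil_le p hvp
          have h2 : p.length + 1 ≤ m + 1 := by simpa [SimpleGraph.Walk.length_cons] using hw
          omega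
        subst hav
        exact ih (p.dropUntil _ hvp) hlen hv hb

/-- A walk starting in `A` and avoiding `v` stays in `A`. -/
lemma stay_inside {A : Set V} {v : V}
    (hsep : ∀ x ∈ A, x ≠ v → ∀ y ∉ A, ¬ G.Adj x y) :
    ∀ {a b : V} (w : G.Walk a b), a ∈ A → (∀ u ∈ w.support, u ≠ v) →
      ∀ u ∈ w.support, u ∈ A := by
  intro a b w
  induction w with
  | nil =>
    intro ha _ u hu
    simp at hu; subst hu; exact ha
  | @cons a c b h p ih =>
    intro ha hv u hu
    have hav : a ≠ v := hv a (by simp)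
    have hc : c ∈ A := by
      by_contra hc
      exact hsep a ha hav c hc h
    rcases List.mem_cons.mp (by simpa [SimpleGraph.Walk.support_cons] using hu) with h1 | h1
    · subst h1; exact ha
    · exact ih hc (fun u hu => hv u (by simp [SimpleGraph.Walk.support_cons]; right; exact hu)) u h1

/-- Lift a walk whose support lies in `Yset` to the induced subgraph on `Yset`. -/
lemma reach_lift {Yset Bset : Set V} :
    ∀ {x y : V} (w : G.Walk x y), (∀ u ∈ w.support, u ∈ Yset) →
      (∀ u ∈ w.support, u ∈ Bset) → ∀ (hx : x ∈ Yset) (hy : y ∈ Yset),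
      ReachableIn (G.induce Yset) (Subtype.val ⁻¹' Bset) ⟨x, hx⟩ ⟨y, hy⟩ := by
  intro x y w
  induction w with
  | nil =>
    intro hY hB hx hy
    exact ⟨.nil, by simp; exact hB _ (by simp)⟩
  | @cons a c b h p ih =>
    intro hY hB hx hy
    have hc : c ∈ Yset := hY c (by simp [SimpleGraph.Walk.support_cons])
    obtain ⟨w', hw'⟩ := ih (fun u hu => hY u (by simp [SimpleGraph.Walk.support_cons]; right; exact hu))
      (fun u hu => hB u (by simp [SimpleGraph.Walk.support_cons]; right; exact hu)) hc hy
    have hadj : (G.induce Yset).Adj ⟨a, hx⟩ ⟨c, hc⟩ := by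
      simpa [SimpleGraph.comap_adj] using h
    refine ⟨.cons hadj w', ?_⟩
    intro u hu
    rcases List.mem_cons.mp (by simpa [SimpleGraph.Walk.support_cons] using hu) with h1 | h1
    · subst h1; exact hB a (by simp)
    · exact hw' u h1

/-- Push a walk in the induced subgraph on `Yset` down to `G`. -/
lemma reach_push {Yset : Set V} {Bset : Set ↥Yset} :
    ∀ {a b : ↥Yset} (w : (G.induce Yset).Walk a b), (∀ u ∈ w.support, u ∈ Bset) →
      ReachableIn G (Subtype.val '' Bset) a.1 b.1 := by
  intro a b w
  induction w with
  | nil =>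
    intro hB
    refine ⟨.nil, ?_⟩
    intro u hu
    simp only [SimpleGraph.Walk.support_nil, List.mem_singleton] at hu
    subst hu
    exact ⟨_, hB _ (by simp), rfl⟩
  | @cons a c b h p ih =>
    intro hB
    obtain ⟨w', hw'⟩ := ih (fun u hu => hB u (by simp [SimpleGraph.Walk.support_cons]; right; exact hu))
    have hadj : G.Adj a.1 c.1 := by simpa [SimpleGraph.comap_adj] using h
    refine ⟨.cons hadj w', ?_⟩
    intro u hu
    rcases List.mem_cons.mp (by simpa [SimpleGraph.Walk.support_cons] using hu) with h1 | h1
    · subst h1; exact ⟨a, hB a (by simp), rfl⟩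
    · exact hw' u h1

lemma cut_lift [Fintype V] (G : SimpleGraph V) (Yset A : Set V) :
    (cutSet (G.induce Yset) (Subtype.val ⁻¹' A)).ncard ≤ (cutSet G A).ncard := by
  have hinj : Function.Injective (Sym2.map (Subtype.val : ↥Yset → V)) :=
    Sym2.map.injective Subtype.val_injective
  have himg : Sym2.map (Subtype.val : ↥Yset → V) '' cutSet (G.induce Yset) (Subtype.val ⁻¹' A)
      ⊆ cutSet G A := by
    rintro e ⟨e', ⟨he', x, y, rfl, hx, hy⟩, rfl⟩
    refine ⟨?_, x.1, y.1, by simp, hx, hy⟩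
    simp only [SimpleGraph.mem_edgeSet] at he' ⊢
    simpa [SimpleGraph.comap_adj] using he'
  calc (cutSet (G.induce Yset) (Subtype.val ⁻¹' A)).ncard
      = (Sym2.map (Subtype.val : ↥Yset → V) '' cutSet (G.induce Yset) (Subtype.val ⁻¹' A)).ncard :=
        (Set.ncard_image_of_injective _ hinj).symm
    _ ≤ (cutSet G A).ncard := Set.ncard_le_ncard himg (Set.toFinite _)

lemma cut_bound [Fintype V] (G : SimpleGraph V) (Yset : Set V) (A : Set V) (A' : Set ↥Yset)
    (hsub : cutSet G A ⊆ Sym2.map Subtype.val '' cutSet (G.induce Yset) A') :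
    (cutSet G A).ncard ≤ (cutSet (G.induce Yset) A').ncard := by
  have hinj : Function.Injective (Sym2.map (Subtype.val : ↥Yset → V)) :=
    Sym2.map.injective Subtype.val_injective
  calc (cutSet G A).ncard ≤ (Sym2.map Subtype.val '' cutSet (G.induce Yset) A').ncard :=
        Set.ncard_le_ncard hsub (Set.toFinite _)
    _ = (cutSet (G.induce Yset) A').ncard := Set.ncard_image_of_injective _ hinj

end Aux

theorem stmt15 {V : Type*} [Fintype V] (G : SimpleGraph V) (hG : G.Connected)
    (X Y : Set V) (v : V) (hXY : X ∪ Y = Set.univ) (hXYv : X ∩ Y = {v})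
    (hsep : ∀ x ∈ X \ {v}, ∀ y ∈ Y \ {v}, ¬ G.Adj x y)
    (S T : Set V) (hS : S.Nonempty) (hT : T.Nonempty) (hST : Disjoint S T)
    (hXS : ((X \ Y) ∩ S).Nonempty) (hXT : X ∩ T = ∅)
    (hYS : Y ∩ S = ∅) (hYT : ((Y \ X) ∩ T).Nonempty) (k : ℕ) :
    TwoSetsCutUncut G S T k ↔
      (TwoSetsCutUncut (G.induce Y) (Subtype.val ⁻¹' {v}) (Subtype.val ⁻¹' T) k ∨
       TwoSetsCutUncut (G.induce X) (Subtype.val ⁻¹' S) (Subtype.val ⁻¹' {v}) k) := by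
  classical
  have hvX : v ∈ X := (hXYv ▸ (Set.mem_singleton v)).1
  have hvY : v ∈ Y := (hXYv ▸ (Set.mem_singleton v)).2
  have hunion : ∀ u : V, u ∈ X ∨ u ∈ Y := fun u => by
    have : u ∈ X ∪ Y := hXY ▸ Set.mem_univ u
    exact this
  have hXv : ∀ u ∈ X, u ∈ Y → u = v := fun u hu1 hu2 => by
    have : u ∈ X ∩ Y := ⟨hu1, hu2⟩
    rw [hXYv] at this; exact this
  -- separation in the "single set" form
  have hsepX : ∀ x ∈ X, x ≠ v → ∀ y ∉ X, ¬ G.Adj x y := by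
    intro x hx hxv y hy
    rcases hunion y with h | h
    · exact absurd h hy
    · exact hsep x ⟨hx, hxv⟩ y ⟨h, fun hyv => hy (hyv ▸ hvX)⟩
  have hsepY : ∀ x ∈ Y, x ≠ v → ∀ y ∉ Y, ¬ G.Adj x y := by
    intro x hx hxv y hy hadj
    rcases hunion y with h | h
    · exact hsep y ⟨h, fun hyv => hy (hyv ▸ hvY)⟩ x ⟨hx, hxv⟩ hadj.symm
    · exact hy h
  have hSX : S ⊆ X := by
    intro s hs
    rcases hunion s with h | h
    · exact h
    · have : s ∈ Y ∩ S := ⟨h, hs⟩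
      rw [hYS] at this
      exact this.elim
  have hSv : ∀ s ∈ S, s ≠ v := by
    intro s hs hsv
    subst hsv
    have : s ∈ Y ∩ S := ⟨hvY, hs⟩
    rw [hYS] at this; exact this
  have hTY : T ⊆ Y := by
    intro t ht
    rcases hunion t with h | h
    · have : t ∈ X ∩ T := ⟨h, ht⟩
      rw [hXT] at this
      exact this.elim
    · exact h
  have hTv : ∀ t ∈ T, t ≠ v := by
    intro t ht htv
    subst htv
    have : t ∈ X ∩ T := ⟨hvX, ht⟩
    rw [hXT] at this; exact this
  constructor
  · rintro ⟨A, B, hAB, hABd, hSA, hTB, hSconn, hTconn, hcut⟩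
    have hmemAB : ∀ u : V, u ∈ A ∨ u ∈ B := fun u => by
      have : u ∈ A ∪ B := by rw [hAB]; trivial
      exact this
    have hnotboth : ∀ u : V, u ∈ A → u ∈ B → False := fun u h1 h2 => by
      have : u ∈ A ∩ B := ⟨h1, h2⟩
      rw [hABd] at this; exact this
    rcases hmemAB v with hvA | hvB
    · left
      refine ⟨Subtype.val ⁻¹' A, Subtype.val ⁻¹' B, ?_, ?_, ?_, ?_, ?_, ?_, ?_⟩
      · ext u; simpa using hmemAB u.1
      · ext u; simp; intro h1 h2; exact hnotboth u.1 h1 h2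
      · intro u hu; simp at hu ⊢; rw [hu]; exact hvA
      · intro u hu; exact hTB hu
      · intro x hx y hy
        simp at hx hy
        have hxy : x = y := Subtype.ext (hx.trans hy.symm)
        subst hxy
        exact ⟨.nil, by simp; rw [hx]; exact hvA⟩
      · intro x hx y hy
        obtain ⟨w, hw⟩ := hTconn x.1 hx y.1 hy
        have hnv : ∀ u ∈ w.support, u ≠ v := fun u hu huv =>
          hnotboth v hvA (huv ▸ hw u hu)
        have hsupY : ∀ u ∈ w.support, u ∈ Y := stay_inside hsepY w (hTY hx) hnv
        exact reach_lift w hsupY hw x.2 y.2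
      · exact le_trans (cut_lift G Y A) hcut
    · right
      refine ⟨Subtype.val ⁻¹' A, Subtype.val ⁻¹' B, ?_, ?_, ?_, ?_, ?_, ?_, ?_⟩
      · ext u; simpa using hmemAB u.1
      · ext u; simp; intro h1 h2; exact hnotboth u.1 h1 h2
      · intro u hu; exact hSA hu
      · intro u hu; simp at hu ⊢; rw [hu]; exact hvB
      · intro x hx y hy
        obtain ⟨w, hw⟩ := hSconn x.1 hx y.1 hy
        have hnv : ∀ u ∈ w.support, u ≠ v := fun u hu huv =>
          hnotboth v (huv ▸ hw u hu) hvB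
        have hsupX : ∀ u ∈ w.support, u ∈ X := stay_inside hsepX w (hSX hx) hnv
        exact reach_lift w hsupX hw x.2 y.2
      · intro x hx y hy
        simp at hx hy
        have hxy : x = y := Subtype.ext (hx.trans hy.symm)
        subst hxy
        exact ⟨.nil, by simp; rw [hx]; exact hvB⟩
      · exact le_trans (cut_lift G X A) hcut
  · rintro (⟨A', B', h1, h2, h3, h4, h5, h6, h7⟩ | ⟨A', B', h1, h2, h3, h4, h5, h6, h7⟩)
    · -- Y-instance: A := X ∪ val '' A', B := val '' B'
      have hvA' : (⟨v, hvY⟩ : ↥Y) ∈ A' := h3 (by simp)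
      have hAB' : ∀ u : ↥Y, u ∈ A' ∨ u ∈ B' := fun u => by
        have : u ∈ A' ∪ B' := by rw [h1]; trivial
        exact this
      have hnb' : ∀ u : ↥Y, u ∈ A' → u ∈ B' → False := fun u ha hb => by
        have : u ∈ A' ∩ B' := ⟨ha, hb⟩
        rw [h2] at this; exact this
      refine ⟨X ∪ Subtype.val '' A', Subtype.val '' B', ?_, ?_, ?_, ?_, ?_, ?_, ?_⟩
      · ext u
        simp only [Set.mem_union, Set.mem_univ, iff_true]
        rcases hunion u with h | h
        · exact Or.inl (Or.inl h)
        · rcases hAB' ⟨u, h⟩ with h' | h'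
          · exact Or.inl (Or.inr ⟨⟨u, h⟩, h', rfl⟩)
          · exact Or.inr ⟨⟨u, h⟩, h', rfl⟩
      · ext u
        simp only [Set.mem_inter_iff, Set.mem_union, Set.mem_empty_iff_false, iff_false]
        rintro ⟨h1', ⟨b, hb, rfl⟩⟩
        rcases h1' with h' | h'
        · have : b.1 = v := hXv b.1 h' b.2
          have : b = ⟨v, hvY⟩ := Subtype.ext this
          exact hnb' _ (this ▸ hvA') hb
        · obtain ⟨a, ha, hab⟩ := h'
          have : a = b := Subtype.val_injective hab
          exact hnb' b (this ▸ ha) hb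
      · exact fun s hs => Or.inl (hSX hs)
      · exact fun t ht => ⟨⟨t, hTY ht⟩, h4 (by simpa using ht), rfl⟩
      · intro x hx y hy
        obtain ⟨w⟩ := hG.preconnected x y
        exact reachableIn_mono
          (conn_inside hvX hsepX w.length w le_rfl (hSX hx) (hSX hy))
          (Set.subset_union_left)
      · intro x hx y hy
        have hr := h6 ⟨x, hTY hx⟩ (by simpa using hx) ⟨y, hTY hy⟩ (by simpa using hy)
        obtain ⟨w, hw⟩ := hr
        exact reach_push w hw
      · refine le_trans (cut_bound G Y (X ∪ Subtype.val '' A') A' ?_) h7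
        rintro e ⟨he, x, y, rfl, hx, hy⟩
        have hyX : y ∉ X := fun h => hy (Or.inl h)
        have hyY : y ∈ Y := (hunion y).resolve_left hyX
        have hyv : y ≠ v := fun h => hyX (h ▸ hvX)
        have hadj : G.Adj x y := he
        have hxY : x ∈ Y := by
          by_contra hxY
          have hxX : x ∈ X := (hunion x).resolve_right hxY
          have hxv : x ≠ v := fun h => hxY (h ▸ hvY)
          exact hsepX x hxX hxv y hyX hadj
        have hxA' : (⟨x, hxY⟩ : ↥Y) ∈ A' := by
          rcases hx with h' | h'
          · have : x = v := hXv x h' hxY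
            exact (Subtype.ext this : (⟨x, hxY⟩ : ↥Y) = ⟨v, hvY⟩) ▸ hvA'
          · obtain ⟨a, ha, hav⟩ := h'
            exact (Subtype.ext hav.symm : (⟨x, hxY⟩ : ↥Y) = a) ▸ ha
        have hyA' : (⟨y, hyY⟩ : ↥Y) ∉ A' := fun h =>
          hy (Or.inr ⟨⟨y, hyY⟩, h, rfl⟩)
        refine ⟨s((⟨x, hxY⟩ : ↥Y), ⟨y, hyY⟩), ⟨?_, _, _, rfl, hxA', hyA'⟩, by simp⟩
        simp only [SimpleGraph.mem_edgeSet, SimpleGraph.comap_adj]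
        exact hadj
    · -- X-instance: A := val '' A', B := Y ∪ val '' B'
      have hvB' : (⟨v, hvX⟩ : ↥X) ∈ B' := h4 (by simp)
      have hAB' : ∀ u : ↥X, u ∈ A' ∨ u ∈ B' := fun u => by
        have : u ∈ A' ∪ B' := by rw [h1]; trivial
        exact this
      have hnb' : ∀ u : ↥X, u ∈ A' → u ∈ B' → False := fun u ha hb => by
        have : u ∈ A' ∩ B' := ⟨ha, hb⟩
        rw [h2] at this; exact this
      refine ⟨Subtype.val '' A', Y ∪ Subtype.val '' B', ?_, ?_, ?_, ?_, ?_, ?_, ?_⟩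
      · ext u
        simp only [Set.mem_union, Set.mem_univ, iff_true]
        rcases hunion u with h | h
        · rcases hAB' ⟨u, h⟩ with h' | h'
          · exact Or.inl ⟨⟨u, h⟩, h', rfl⟩
          · exact Or.inr (Or.inr ⟨⟨u, h⟩, h', rfl⟩)
        · exact Or.inr (Or.inl h)
      · ext u
        simp only [Set.mem_inter_iff, Set.mem_union, Set.mem_empty_iff_false, iff_false]
        rintro ⟨⟨a, ha, rfl⟩, h'⟩
        rcases h' with h' | h'
        · have : a.1 = v := hXv a.1 a.2 h'
          have : a = ⟨v, hvX⟩ := Subtype.ext this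
          exact hnb' _ ha (this ▸ hvB')
        · obtain ⟨b, hb, hab⟩ := h'
          have : b = a := Subtype.val_injective hab
          exact hnb' a ha (this ▸ hb)
      · exact fun s hs => ⟨⟨s, hSX hs⟩, h3 (by simpa using hs), rfl⟩
      · exact fun t ht => Or.inl (hTY ht)
      · intro x hx y hy
        have hr := h5 ⟨x, hSX hx⟩ (by simpa using hx) ⟨y, hSX hy⟩ (by simpa using hy)
        obtain ⟨w, hw⟩ := hr
        exact reach_push w hw
      · intro x hx y hy
        obtain ⟨w⟩ := hG.preconnected x y
        exact reachableIn_mono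
          (conn_inside hvY hsepY w.length w le_rfl (hTY hx) (hTY hy))
          (Set.subset_union_left)
      · refine le_trans (cut_bound G X (Subtype.val '' A') A' ?_) h7
        rintro e ⟨he, x, y, rfl, hx, hy⟩
        obtain ⟨a, ha, rfl⟩ := hx
        have hav : a.1 ≠ v := fun h =>
          hnb' a ha ((Subtype.ext h : a = ⟨v, hvX⟩) ▸ hvB')
        have hadj : G.Adj a.1 y := he
        have hyX : y ∈ X := by
          by_contra hyX
          exact hsepX a.1 a.2 hav y hyX hadj
        have hyA' : (⟨y, hyX⟩ : ↥X) ∉ A' := fun h => hy ⟨⟨y, hyX⟩, h, rfl⟩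
        refine ⟨s(a, (⟨y, hyX⟩ : ↥X)), ⟨?_, _, _, rfl, ha, hyA'⟩, by simp⟩
        simp only [SimpleGraph.mem_edgeSet, SimpleGraph.comap_adj]
        exact hadj
end
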